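/- arXiv:1608.03189 — 6 statements merged into one kernel-verified Lean document; each statement's English description precedes it below -/
import Mathlib

section
/- Let S be a set of points in PG(d,ℝ) with the property that every d-subset of S spans a hyperplane. Let T be a (d+2)-subset of S that spans the whole space. Then at most one (d+1)-subset of T spans a hyperplane; all other (d+1)-subsets of T span the whole space. -/
open Module

/-- If every `d`-subset of `S` spans a hyperplane and `T ⊆ S` is a `(d+2)`-subset spanning
the whole space, then at most one `(d+1)`-subset of `T` spans a hyperplane and every
`(d+1)`-subset of `T` spans a hyperplane or the whole space. -/
theorem stmt2 (d : ℕ) (hd : 1 ≤ d)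
    (S : Set (Projectivization ℝ (Fin (d+1) → ℝ)))
    (hspan : ∀ T : Finset (Projectivization ℝ (Fin (d+1) → ℝ)), ↑T ⊆ S → T.card = d →
      finrank ℝ ↥(⨆ p ∈ T, Projectivization.submodule p) = d)
    (T : Finset (Projectivization ℝ (Fin (d+1) → ℝ))) (hTS : ↑T ⊆ S)
    (hTcard : T.card = d + 2)
    (hTtop : (⨆ p ∈ T, Projectivization.submodule p) = ⊤) :
    (∀ Q₁ ⊆ T, ∀ Q₂ ⊆ T, Q₁.card = d + 1 → Q₂.card = d + 1 →
      finrank ℝ ↥(⨆ p ∈ Q₁, Projectivization.submodule p) = d →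
      finrank ℝ ↥(⨆ p ∈ Q₂, Projectivization.submodule p) = d → Q₁ = Q₂) ∧
    (∀ Q ⊆ T, Q.card = d + 1 →
      finrank ℝ ↥(⨆ p ∈ Q, Projectivization.submodule p) = d ∨
      (⨆ p ∈ Q, Projectivization.submodule p) = ⊤) := by
  classical
  have hV : finrank ℝ (Fin (d+1) → ℝ) = d + 1 := Module.finrank_fin_fun ℝ
  constructor
  · intro Q₁ hQ₁T Q₂ hQ₂T hc₁ hc₂ hr₁ hr₂
    by_contra hne
    set I := Q₁ ∩ Q₂ with hI
    have hIT : I ⊆ T := (Finset.inter_subset_left).trans hQ₁T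
    have hcu : (Q₁ ∪ Q₂).card + I.card = Q₁.card + Q₂.card :=
      Finset.card_union_add_card_inter Q₁ Q₂
    have hcuT : (Q₁ ∪ Q₂).card ≤ T.card :=
      Finset.card_le_card (Finset.union_subset hQ₁T hQ₂T)
    have hIne : I ≠ Q₁ := by
      intro h
      have h1 : Q₁ ⊆ Q₂ := by
        rw [← h]; exact Finset.inter_subset_right
      exact hne (Finset.eq_of_subset_of_card_le h1 (by omega))
    have hIlt : I.card < Q₁.card :=
      Finset.card_lt_card (lt_of_le_of_ne Finset.inter_subset_left hIne)
    have hIcard : I.card = d := by omega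
    have hIspan : finrank ℝ ↥(⨆ p ∈ I, Projectivization.submodule p) = d :=
      hspan I (fun x hx => hTS (hIT (Finset.mem_coe.mp hx))) hIcard
    have heq : ∀ Q : Finset (Projectivization ℝ (Fin (d+1) → ℝ)), I ⊆ Q →
        finrank ℝ ↥(⨆ p ∈ Q, Projectivization.submodule p) = d →
        (⨆ p ∈ I, Projectivization.submodule p) = ⨆ p ∈ Q, Projectivization.submodule p := by
      intro Q hIQ hr
      refine Submodule.eq_of_le_of_finrank_le (biSup_mono hIQ) (by omega)
    have h1 := heq Q₁ Finset.inter_subset_left hr₁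
    have h2 := heq Q₂ Finset.inter_subset_right hr₂
    have hU : Q₁ ∪ Q₂ = T :=
      Finset.eq_of_subset_of_card_le (Finset.union_subset hQ₁T hQ₂T) (by omega)
    have hsplit : (⨆ p ∈ T, Projectivization.submodule p) =
        (⨆ p ∈ Q₁, Projectivization.submodule p) ⊔ ⨆ p ∈ Q₂, Projectivization.submodule p := by
      rw [← hU]
      simp only [Finset.mem_union, iSup_or, iSup_sup_eq]
    rw [hTtop, ← h1, ← h2, sup_idem] at hsplit
    have : finrank ℝ ↥(⊤ : Submodule ℝ (Fin (d+1) → ℝ)) = d + 1 := by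
      rw [finrank_top]; exact hV
    rw [hsplit, hIspan] at this
    omega
  · intro Q hQT hQcard
    obtain ⟨Q', hQ'Q, hQ'card⟩ := Finset.exists_subset_card_eq (s := Q) (n := d) (by omega)
    have hlow : finrank ℝ ↥(⨆ p ∈ Q', Projectivization.submodule p) = d :=
      hspan Q' (fun x hx => hTS (hQT (hQ'Q (Finset.mem_coe.mp hx)))) hQ'card
    have hle : (⨆ p ∈ Q', Projectivization.submodule p) ≤ ⨆ p ∈ Q, Projectivization.submodule p :=
      biSup_mono hQ'Q
    have h1 : d ≤ finrank ℝ ↥(⨆ p ∈ Q, Projectivization.submodule p) :=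
      le_trans (le_of_eq hlow.symm) (Submodule.finrank_mono hle)
    have h2 : finrank ℝ ↥(⨆ p ∈ Q, Projectivization.submodule p) ≤ d + 1 :=
      le_trans (Submodule.finrank_le _) (le_of_eq hV)
    rcases eq_or_lt_of_le h1 with h | h
    · exact Or.inl h.symm
    · right
      apply Submodule.eq_top_of_finrank_eq
      rw [hV]; omega
end

section
/- Let S be a set of n points in PG(d,ℝ) such that every d points of S span a hyperplane, and let τ_{d+i} denote the number of hyperplanes containing exactly d+i points of S. Then the sum over i from 1 to n−d−1 of (n−d−i)·binomial(d+i, i−1)·τ_{d+i} is at most binomial(n, d+2). -/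
/-!
Any `d` points of `S` on a hyperplane `H` already span it, so two hyperplanes sharing `d` points
of `S` coincide. Choosing `d + 1` points of `S ∩ H` and one point of `S \ H` gives a
`(d + 2)`-subset of `S`, and the subset determines the choice: if it arose from `(H, A, p)` and
`(H', A', p')`, then `A` and `A'` share `d` points, so `H = H'`, and `H` cannot contain the
extra point. Hence `∑_H C(|S ∩ H|, d + 1) (n - |S ∩ H|) ≤ C(n, d + 2)`, and the hyperplanes with
`|S ∩ H| = d + i` contribute exactly `(n - d - i) C(d + i, i - 1) τ_{d + i}`.
-/

open Module Finset
open scoped LinearAlgebra.Projectivization Classical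

namespace SecantCount

variable {K V : Type*} [DivisionRing K] [AddCommGroup V] [Module K V]

noncomputable def pointSpan (T : Finset (ℙ K V)) : Submodule K V :=
  ⨆ p ∈ T, p.submodule

noncomputable def pointsOn (S : Finset (ℙ K V)) (H : Submodule K V) : Finset (ℙ K V) :=
  {p ∈ S | p.submodule ≤ H}

/-- Every `d` points of `S` span a hyperplane when `finrank K V = d + 1`. -/
def IndependentOfCard (d : ℕ) (S : Finset (ℙ K V)) : Prop :=
  ∀ T ⊆ S, #T = d → finrank K (pointSpan T) = d

/-- Exactly the hyperplanes containing at least `d` points of `S`. -/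
noncomputable def hyperplanes (d : ℕ) (S : Finset (ℙ K V)) : Finset (Submodule K V) :=
  (S.powersetCard d).image pointSpan

variable {d : ℕ} {S : Finset (ℙ K V)}

lemma pointsOn_subset (S : Finset (ℙ K V)) (H : Submodule K V) : pointsOn S H ⊆ S :=
  filter_subset _ _

lemma finrank_of_mem_hyperplanes (hS : IndependentOfCard d S) {H : Submodule K V}
    (hH : H ∈ hyperplanes d S) : finrank K H = d := by
  obtain ⟨T, hT, rfl⟩ := mem_image.1 hH
  exact hS T (mem_powersetCard.1 hT).1 (mem_powersetCard.1 hT).2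

variable [FiniteDimensional K V]

lemma pointSpan_eq_of_subset_pointsOn (hS : IndependentOfCard d S) {H : Submodule K V}
    (hH : finrank K H = d) {T : Finset (ℙ K V)} (hT : d ≤ #T) (hTH : T ⊆ pointsOn S H) :
    pointSpan T = H := by
  have hTS : T ⊆ S := hTH.trans (pointsOn_subset S H)
  have hTle : pointSpan T ≤ H := iSup₂_le fun p hp => (mem_filter.1 (hTH hp)).2
  obtain ⟨T₀, hT₀T, hT₀⟩ := exists_subset_card_eq hT
  have hT₀le : pointSpan T₀ ≤ pointSpan T := biSup_mono hT₀T
  have hT₀H : pointSpan T₀ = H :=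
    Submodule.eq_of_le_of_finrank_eq (hT₀le.trans hTle) (by rw [hS T₀ (hT₀T.trans hTS) hT₀, hH])
  exact le_antisymm hTle (hT₀H ▸ hT₀le)

lemma eq_of_subset_pointsOn (hS : IndependentOfCard d S) {H H' : Submodule K V}
    (hH : finrank K H = d) (hH' : finrank K H' = d) {T : Finset (ℙ K V)} (hT : d ≤ #T)
    (hTH : T ⊆ pointsOn S H) (hTH' : T ⊆ pointsOn S H') : H = H' :=
  (pointSpan_eq_of_subset_pointsOn hS hH hT hTH).symm.trans
    (pointSpan_eq_of_subset_pointsOn hS hH' hT hTH')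

lemma mem_hyperplanes_of_finrank (hS : IndependentOfCard d S) {H : Submodule K V}
    (hH : finrank K H = d) (hd : d ≤ #(pointsOn S H)) : H ∈ hyperplanes d S := by
  obtain ⟨T, hTH, hT⟩ := exists_subset_card_eq hd
  exact mem_image.2 ⟨T, mem_powersetCard.2 ⟨hTH.trans (pointsOn_subset S H), hT⟩,
    pointSpan_eq_of_subset_pointsOn hS hH hT.ge hTH⟩

lemma ncard_setOf_finrank_eq (hS : IndependentOfCard d S) {j : ℕ} (hj : d ≤ j) :
    {H : Submodule K V | finrank K H = d ∧
      {p ∈ (S : Set (ℙ K V)) | p.submodule ≤ H}.ncard = j}.ncard =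
    #{H ∈ hyperplanes d S | #(pointsOn S H) = j} := by
  have hpoints (H : Submodule K V) :
      {p ∈ (S : Set (ℙ K V)) | p.submodule ≤ H}.ncard = #(pointsOn S H) := by
    rw [← Set.ncard_coe_finset, pointsOn, coe_filter]
    rfl
  rw [← Set.ncard_coe_finset, coe_filter]
  congr 1
  ext H
  simp only [Set.mem_ofPred_eq, hpoints]
  constructor
  · rintro ⟨hH, rfl⟩
    exact ⟨mem_hyperplanes_of_finrank hS hH hj, rfl⟩
  · rintro ⟨hH, rfl⟩
    exact ⟨finrank_of_mem_hyperplanes hS hH, rfl⟩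

lemma eq_of_insert_eq (hS : IndependentOfCard d S) {H H' : Submodule K V}
    (hH : finrank K H = d) (hH' : finrank K H' = d) {A A' : Finset (ℙ K V)}
    (hA : A ⊆ pointsOn S H) (hA' : A' ⊆ pointsOn S H') (hAc : #A = d + 1) (hA'c : #A' = d + 1)
    {p p' : ℙ K V} (hp : p ∉ pointsOn S H) (hp' : p' ∉ pointsOn S H')
    (h : insert p A = insert p' A') : H = H' ∧ A = A' ∧ p = p' := by
  have hAA' : A.erase p' ⊆ A' := fun q hq => by
    have : q ∈ insert p' A' := h ▸ mem_insert_of_mem (mem_of_mem_erase hq)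
    exact (mem_insert.1 this).resolve_left (ne_of_mem_erase hq)
  have hHH' : H = H' :=
    eq_of_subset_pointsOn hS hH hH' (by have := pred_card_le_card_erase (s := A) (a := p'); omega)
      ((erase_subset _ _).trans hA) (hAA'.trans hA')
  subst hHH'
  have hp'A : p' ∉ A := fun hp'A => hp' (hA hp'A)
  have hAeq : A = A' := eq_of_subset_of_card_le (by rwa [erase_eq_of_notMem hp'A] at hAA')
    (by omega)
  subst hAeq
  refine ⟨rfl, rfl, ?_⟩
  have : p ∈ insert p' A := h ▸ mem_insert_self p A
  exact (mem_insert.1 this).resolve_right fun hpA => hp (hA hpA)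

theorem sum_choose_mul_card_sdiff_le (hS : IndependentOfCard d S) :
    ∑ H ∈ hyperplanes d S, (#(pointsOn S H)).choose (d + 1) * (#S - #(pointsOn S H))
      ≤ (#S).choose (d + 2) := by
  have hcard (H : Submodule K V) : (#(pointsOn S H)).choose (d + 1) * (#S - #(pointsOn S H))
      = #((pointsOn S H).powersetCard (d + 1) ×ˢ (S \ pointsOn S H)) := by
    rw [card_product, card_powersetCard, card_sdiff_of_subset (pointsOn_subset S H)]
  simp only [hcard, ← card_sigma, ← card_powersetCard (d + 2) S]
  refine card_le_card_of_injOn (fun x => insert x.2.2 x.2.1) ?_ ?_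
  · rintro ⟨H, A, p⟩ hx
    simp only [coe_sigma, Set.mem_sigma_iff, mem_coe, mem_product, mem_powersetCard,
      mem_sdiff] at hx
    obtain ⟨-, ⟨hA, hAc⟩, hpS, hp⟩ := hx
    have hpA : p ∉ A := fun hpA => hp (hA hpA)
    exact mem_powersetCard.2 ⟨insert_subset hpS (hA.trans (pointsOn_subset S H)),
      by rw [card_insert_of_notMem hpA, hAc]⟩
  · rintro ⟨H, A, p⟩ hx ⟨H', A', p'⟩ hx' h
    simp only [coe_sigma, Set.mem_sigma_iff, mem_coe, mem_product, mem_powersetCard,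
      mem_sdiff] at hx hx'
    obtain ⟨hH, ⟨hA, hAc⟩, -, hp⟩ := hx
    obtain ⟨hH', ⟨hA', hA'c⟩, -, hp'⟩ := hx'
    obtain ⟨rfl, rfl, rfl⟩ := eq_of_insert_eq hS (finrank_of_mem_hyperplanes hS hH)
      (finrank_of_mem_hyperplanes hS hH') hA hA' hAc hA'c hp hp' h
    rfl

end SecantCount

open SecantCount in
theorem stmt3_general (d n : ℕ)
    (S : Finset (Projectivization ℝ (Fin (d+1) → ℝ))) (hcard : S.card = n)
    (hspan : ∀ T ⊆ S, T.card = d →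
      finrank ℝ ↥(⨆ p ∈ T, Projectivization.submodule p) = d)
    (τ : ℕ → ℕ)
    (hτ : ∀ i, τ i = {H : Submodule ℝ (Fin (d+1) → ℝ) | finrank ℝ ↥H = d ∧
      {p ∈ (S : Set (Projectivization ℝ (Fin (d+1) → ℝ))) | p.submodule ≤ H}.ncard = i}.ncard) :
    ∑ i ∈ Finset.Icc 1 (n - d - 1), (n - d - i) * ((d + i).choose (i - 1)) * τ (d + i)
      ≤ n.choose (d + 2) := by
  subst hcard
  set f : Submodule ℝ (Fin (d+1) → ℝ) → ℕ :=
    fun H => (#(pointsOn S H)).choose (d + 1) * (#S - #(pointsOn S H))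
  have hterm : ∀ i ∈ Icc 1 (#S - d - 1), (#S - d - i) * (d + i).choose (i - 1) * τ (d + i)
      = ∑ H ∈ hyperplanes d S with #(pointsOn S H) - d = i, f H := by
    intro i hi
    have hi1 : 1 ≤ i := (mem_Icc.1 hi).1
    have hfilter : {H ∈ hyperplanes d S | #(pointsOn S H) - d = i}
        = {H ∈ hyperplanes d S | #(pointsOn S H) = d + i} := filter_congr fun H _ => by omega
    rw [hfilter, sum_const_nat (m := (d + i).choose (d + 1) * (#S - (d + i))) fun H hH => by
      simp only [f, (mem_filter.1 hH).2], hτ, ncard_setOf_finrank_eq hspan (by omega),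
      Nat.choose_symm_of_eq_add (b := d + 1) (by omega), Nat.sub_sub]
    ring
  calc ∑ i ∈ Icc 1 (#S - d - 1), (#S - d - i) * (d + i).choose (i - 1) * τ (d + i)
      = ∑ H ∈ hyperplanes d S with #(pointsOn S H) - d ∈ Icc 1 (#S - d - 1), f H := by
        rw [sum_congr rfl hterm, sum_fiberwise_eq_sum_filter]
    _ ≤ ∑ H ∈ hyperplanes d S, f H := sum_le_sum_of_subset (filter_subset _ _)
    _ ≤ (#S).choose (d + 2) := sum_choose_mul_card_sdiff_le hspan

/-- The secant-count inequality:
`∑_{i=1}^{n-d-1} (n-d-i) C(d+i, i-1) τ_{d+i} ≤ C(n, d+2)`. -/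
theorem stmt3 (d n : ℕ) (hd : 1 ≤ d)
    (S : Finset (Projectivization ℝ (Fin (d+1) → ℝ))) (hcard : S.card = n)
    (hspan : ∀ T ⊆ S, T.card = d →
      finrank ℝ ↥(⨆ p ∈ T, Projectivization.submodule p) = d)
    (htop : (⨆ p ∈ S, Projectivization.submodule p) = ⊤)
    (τ : ℕ → ℕ)
    (hτ : ∀ i, τ i = {H : Submodule ℝ (Fin (d+1) → ℝ) | finrank ℝ ↥H = d ∧
      {p ∈ (S : Set (Projectivization ℝ (Fin (d+1) → ℝ))) | p.submodule ≤ H}.ncard = i}.ncard) :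
    ∑ i ∈ Finset.Icc 1 (n - d - 1), (n - d - i) * ((d + i).choose (i - 1)) * τ (d + i)
      ≤ n.choose (d + 2) :=
  stmt3_general d n S hcard hspan τ hτ
end

section
/- Let S be a set of n points in PG(d,ℝ) such that every d points of S span a hyperplane and S spans the whole space. Then the number of hyperplanes meeting S in exactly d points is at least binomial(n, d) − ((d+1)/(d+2))·binomial(n, d+1). -/
open Module

private lemma stmt4_ptwise (d i n : ℕ) (hi : d+1 ≤ i) (hn : i+1 ≤ n) :
    (i.choose d : ℚ) ≤ ((d:ℚ)+1) / ((n - (d+1) : ℕ) : ℚ) * ((n - i : ℕ) : ℚ) * (i.choose (d+1) : ℚ) := by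
  obtain ⟨a, rfl⟩ : ∃ a, i = d+1+a := ⟨i - (d+1), by omega⟩
  obtain ⟨b, rfl⟩ : ∃ b, n = (d+1+a)+1+b := ⟨n - (d+1+a+1), by omega⟩
  have h1 : ((d+1+a)+1+b) - (d+1) = a+b+1 := by omega
  have h2 : ((d+1+a)+1+b) - (d+1+a) = b+1 := by omega
  rw [h1, h2]
  have hc : ((d+1+a).choose (d+1) : ℚ) * ((d:ℚ)+1) = ((d+1+a).choose d : ℚ) * ((a:ℚ)+1) := by
    have h := Nat.choose_succ_right_eq (d+1+a) d
    have h3 : d+1+a - d = a+1 := by omega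
    rw [h3] at h
    exact_mod_cast h
  have hpos : (0:ℚ) < ((a+b+1 : ℕ) : ℚ) := by positivity
  rw [div_mul_eq_mul_div, div_mul_eq_mul_div, le_div_iff₀ hpos]
  push_cast
  nlinarith [Nat.cast_nonneg (α := ℚ) ((d+1+a).choose (d+1)),
    Nat.cast_nonneg (α := ℚ) ((d+1+a).choose d),
    mul_nonneg (mul_nonneg (Nat.cast_nonneg (α := ℚ) a) (Nat.cast_nonneg (α := ℚ) b))
      (Nat.cast_nonneg (α := ℚ) ((d+1+a).choose d))]

private lemma stmt4_scale (d n : ℕ) (hn : d+2 ≤ n) :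
    ((d:ℚ)+1) / ((n - (d+1) : ℕ) : ℚ) * (n.choose (d+2) : ℚ)
      = ((d:ℚ)+1) / ((d:ℚ)+2) * (n.choose (d+1) : ℚ) := by
  have hq : (n.choose (d+2) : ℚ) * ((d:ℚ)+2) = (n.choose (d+1) : ℚ) * ((n - (d+1) : ℕ) : ℚ) := by
    exact_mod_cast Nat.choose_succ_right_eq n (d+1)
  have hpos : (0:ℚ) < ((n - (d+1) : ℕ) : ℚ) := by
    have : 1 ≤ n - (d+1) := by omega
    exact_mod_cast this
  have h2 : (0:ℚ) < (d:ℚ)+2 := by positivity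
  field_simp
  nlinarith [hq]


private lemma stmt4_span {d : ℕ}
    {S T : Finset (Projectivization ℝ (Fin (d+1) → ℝ))}
    {H : Submodule ℝ (Fin (d+1) → ℝ)}
    (hspan : ∀ T ⊆ S, T.card = d →
      finrank ℝ ↥(⨆ p ∈ T, Projectivization.submodule p) = d)
    (hTS : T ⊆ S) (hTc : T.card = d) (hH : finrank ℝ ↥H = d)
    (hTH : ∀ p ∈ T, Projectivization.submodule p ≤ H) :
    (⨆ p ∈ T, Projectivization.submodule p) = H := by
  refine Submodule.eq_of_le_of_finrank_le (iSup₂_le hTH) ?_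
  rw [hH, hspan T hTS hTc]

/-- Lower bound on the number of ordinary hyperplanes:
`τ_d ≥ C(n,d) − ((d+1)/(d+2))·C(n,d+1)`. -/
theorem stmt4 (d n : ℕ) (hd : 1 ≤ d)
    (S : Finset (Projectivization ℝ (Fin (d+1) → ℝ))) (hcard : S.card = n)
    (hspan : ∀ T ⊆ S, T.card = d →
      finrank ℝ ↥(⨆ p ∈ T, Projectivization.submodule p) = d)
    (htop : (⨆ p ∈ S, Projectivization.submodule p) = ⊤) :
    (n.choose d : ℚ) - ((d : ℚ) + 1) / ((d : ℚ) + 2) * (n.choose (d + 1) : ℚ) ≤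
      ({H : Submodule ℝ (Fin (d+1) → ℝ) | finrank ℝ ↥H = d ∧
        {p ∈ (S : Set (Projectivization ℝ (Fin (d+1) → ℝ))) | p.submodule ≤ H}.ncard = d}.ncard : ℚ) := by
  classical
  set pts : Submodule ℝ (Fin (d+1) → ℝ) → Finset (Projectivization ℝ (Fin (d+1) → ℝ)) :=
    fun H => S.filter (fun p => p.submodule ≤ H) with hpts
  set ℋ : Finset (Submodule ℝ (Fin (d+1) → ℝ)) :=
    (S.powersetCard d).image (fun T => ⨆ p ∈ T, Projectivization.submodule p) with hℋ
  have hsub : ∀ H, pts H ⊆ S := fun H => Finset.filter_subset _ _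
  have hptsle : ∀ H, ∀ p ∈ pts H, Projectivization.submodule p ≤ H := by
    intro H p hp
    exact (Finset.mem_filter.mp hp).2
  have hrank : ∀ H ∈ ℋ, finrank ℝ ↥H = d := by
    intro H hH
    obtain ⟨T, hT, rfl⟩ := Finset.mem_image.mp hH
    obtain ⟨hTS, hTc⟩ := Finset.mem_powersetCard.mp hT
    exact hspan T hTS hTc
  -- span of a d-subset of pts H recovers H
  have hspanEq : ∀ H : Submodule ℝ (Fin (d+1) → ℝ), finrank ℝ ↥H = d → ∀ T ⊆ pts H, T.card = d →
      (⨆ p ∈ T, Projectivization.submodule p) = H := by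
    intro H hH T hT hTc
    exact stmt4_span hspan (hT.trans (hsub H)) hTc hH (fun p hp => hptsle H p (hT hp))
  have hdle : ∀ H ∈ ℋ, d ≤ (pts H).card := by
    intro H hH
    obtain ⟨T, hT, rfl⟩ := Finset.mem_image.mp hH
    obtain ⟨hTS, hTc⟩ := Finset.mem_powersetCard.mp hT
    have : T ⊆ pts (⨆ p ∈ T, Projectivization.submodule p) := by
      intro p hp
      refine Finset.mem_filter.mpr ⟨hTS hp, ?_⟩
      exact le_iSup₂ (f := fun p (_ : p ∈ T) => Projectivization.submodule p) p hp
    calc d = T.card := hTc.symm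
    _ ≤ _ := Finset.card_le_card this
  have hlt : ∀ H ∈ ℋ, (pts H).card < n := by
    intro H hH
    by_contra hge
    have hEq : pts H = S := Finset.eq_of_subset_of_card_le (hsub H) (by omega)
    have hle : (⊤ : Submodule ℝ (Fin (d+1) → ℝ)) ≤ H := by
      rw [← htop]
      refine iSup₂_le fun p hp => ?_
      have : p ∈ pts H := hEq ▸ hp
      exact hptsle H p this
    have hHtop : H = ⊤ := top_le_iff.mp hle
    have : finrank ℝ ↥H = d + 1 := by
      rw [hHtop, finrank_top]
      exact finrank_fin_fun ℝ
    have := hrank H hH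
    omega
  -- Identity A
  have hA : S.powersetCard d = ℋ.biUnion (fun H => (pts H).powersetCard d) := by
    ext T
    simp only [Finset.mem_biUnion, Finset.mem_powersetCard]
    constructor
    · rintro ⟨hTS, hTc⟩
      refine ⟨⨆ p ∈ T, Projectivization.submodule p,
        Finset.mem_image.mpr ⟨T, Finset.mem_powersetCard.mpr ⟨hTS, hTc⟩, rfl⟩, ?_, hTc⟩
      intro p hp
      refine Finset.mem_filter.mpr ⟨hTS hp, ?_⟩
      exact le_iSup₂ (f := fun p (_ : p ∈ T) => Projectivization.submodule p) p hp
    · rintro ⟨H, hH, hT, hTc⟩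
      exact ⟨hT.trans (hsub H), hTc⟩
  have hdisj : ∀ H1 ∈ ℋ, ∀ H2 ∈ ℋ, H1 ≠ H2 →
      Disjoint ((pts H1).powersetCard d) ((pts H2).powersetCard d) := by
    intro H1 h1 H2 h2 hne
    rw [Finset.disjoint_left]
    intro T hT1 hT2
    obtain ⟨hTs1, hTc⟩ := Finset.mem_powersetCard.mp hT1
    obtain ⟨hTs2, _⟩ := Finset.mem_powersetCard.mp hT2
    exact hne ((hspanEq H1 (hrank _ h1) T hTs1 hTc).symm.trans
      (hspanEq H2 (hrank _ h2) T hTs2 hTc))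
  have hAcard : n.choose d = ∑ H ∈ ℋ, ((pts H).card).choose d := by
    calc n.choose d = (S.powersetCard d).card := by rw [Finset.card_powersetCard, hcard]
    _ = ∑ H ∈ ℋ, ((pts H).powersetCard d).card := by rw [hA, Finset.card_biUnion hdisj]
    _ = _ := by simp [Finset.card_powersetCard]
  -- Inequality B
  have hB : ∑ H ∈ ℋ, ((pts H).card.choose (d+1)) * (n - (pts H).card) ≤ n.choose (d+2) := by
    set P := ℋ.sigma (fun H => ((pts H).powersetCard (d+1)) ×ˢ (S \ pts H)) with hP
    have hcardP : P.card = ∑ H ∈ ℋ, ((pts H).card.choose (d+1)) * (n - (pts H).card) := by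
      rw [hP, Finset.card_sigma]
      refine Finset.sum_congr rfl fun H hH => ?_
      rw [Finset.card_product, Finset.card_powersetCard, Finset.card_sdiff_of_subset (hsub H), hcard]
    set f : ((_ : Submodule ℝ (Fin (d+1) → ℝ)) ×
        Finset (Projectivization ℝ (Fin (d+1) → ℝ)) × Projectivization ℝ (Fin (d+1) → ℝ)) →
        Finset (Projectivization ℝ (Fin (d+1) → ℝ)) := fun x => insert x.2.2 x.2.1 with hf
    have hmap : ∀ x ∈ P, f x ∈ S.powersetCard (d+2) := by
      rintro ⟨H, A, q⟩ hx
      obtain ⟨hH, hAq⟩ := Finset.mem_sigma.mp hx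
      obtain ⟨hA, hq⟩ := Finset.mem_product.mp hAq
      obtain ⟨hAs, hAc⟩ := Finset.mem_powersetCard.mp hA
      obtain ⟨hqS, hqH⟩ := Finset.mem_sdiff.mp hq
      have hqA : q ∉ A := fun h => hqH (hAs h)
      refine Finset.mem_powersetCard.mpr ⟨?_, ?_⟩
      · intro p hp
        rcases Finset.mem_insert.mp hp with rfl | hp
        · exact hqS
        · exact hsub H (hAs hp)
      · rw [Finset.card_insert_of_notMem hqA, hAc]
    have hinj : Set.InjOn f ↑P := by
      rintro ⟨H1, A1, q1⟩ hx ⟨H2, A2, q2⟩ hy hxy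
      simp only [hf] at hxy
      obtain ⟨hH1, hAq1⟩ := Finset.mem_sigma.mp hx
      obtain ⟨hA1, hq1⟩ := Finset.mem_product.mp hAq1
      obtain ⟨hAs1, hAc1⟩ := Finset.mem_powersetCard.mp hA1
      obtain ⟨hqS1, hqH1⟩ := Finset.mem_sdiff.mp hq1
      obtain ⟨hH2, hAq2⟩ := Finset.mem_sigma.mp hy
      obtain ⟨hA2, hq2⟩ := Finset.mem_product.mp hAq2
      obtain ⟨hAs2, hAc2⟩ := Finset.mem_powersetCard.mp hA2
      obtain ⟨hqS2, hqH2⟩ := Finset.mem_sdiff.mp hq2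
      dsimp only at hH1 hH2 hAs1 hAc1 hqS1 hqH1 hAs2 hAc2 hqS2 hqH2
      have hqA1 : q1 ∉ A1 := fun h => hqH1 (hAs1 h)
      have hqA2 : q2 ∉ A2 := fun h => hqH2 (hAs2 h)
      by_cases hq : q1 = q2
      · subst hq
        have hAeq : A1 = A2 := by
          have e1 : (insert q1 A1).erase q1 = A1 := Finset.erase_insert hqA1
          have e2 : (insert q1 A2).erase q1 = A2 := Finset.erase_insert hqA2
          rw [← e1, ← e2, hxy]
        have hHeq : H1 = H2 := by
          obtain ⟨T, hTA, hTc⟩ := Finset.exists_subset_card_eq (s := A1) (n := d) (by omega)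
          have h1 : (⨆ p ∈ T, Projectivization.submodule p) = H1 :=
            hspanEq H1 (hrank _ hH1) T (hTA.trans hAs1) hTc
          have h2 : (⨆ p ∈ T, Projectivization.submodule p) = H2 :=
            hspanEq H2 (hrank _ hH2) T ((hAeq ▸ hTA).trans hAs2) hTc
          rw [← h1, h2]
        subst hHeq; subst hAeq; rfl
      · exfalso
        have hq2A1 : q2 ∈ A1 := by
          have : q2 ∈ insert q1 A1 := by rw [hxy]; exact Finset.mem_insert_self _ _
          rcases Finset.mem_insert.mp this with h | h
          · exact absurd h.symm hq
          · exact h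
        have hq1A2 : q1 ∈ A2 := by
          have : q1 ∈ insert q2 A2 := by rw [← hxy]; exact Finset.mem_insert_self _ _
          rcases Finset.mem_insert.mp this with h | h
          · exact absurd h hq
          · exact h
        set T := A1.erase q2 with hT
        have hTc : T.card = d := by rw [hT, Finset.card_erase_of_mem hq2A1, hAc1]; omega
        have hTA2 : T ⊆ A2 := by
          intro x hx'
          obtain ⟨hxq2, hxA1⟩ := Finset.mem_erase.mp hx'
          have : x ∈ insert q2 A2 := by rw [← hxy]; exact Finset.mem_insert_of_mem hxA1
          rcases Finset.mem_insert.mp this with h | h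
          · exact absurd h hxq2
          · exact h
        have hHeq : H1 = H2 := by
          have h1 : (⨆ p ∈ T, Projectivization.submodule p) = H1 :=
            hspanEq H1 (hrank _ hH1) T ((Finset.erase_subset _ _).trans hAs1) hTc
          have h2 : (⨆ p ∈ T, Projectivization.submodule p) = H2 :=
            hspanEq H2 (hrank _ hH2) T (hTA2.trans hAs2) hTc
          rw [← h1, h2]
        exact hqH1 (hHeq ▸ hAs2 hq1A2)
    calc ∑ H ∈ ℋ, ((pts H).card.choose (d+1)) * (n - (pts H).card)
        = P.card := hcardP.symm
      _ ≤ (S.powersetCard (d+2)).card := Finset.card_le_card_of_injOn f hmap hinj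
      _ = n.choose (d+2) := by rw [Finset.card_powersetCard, hcard]
  -- identification of the ordinary-hyperplane set with a filter of ℋ
  set OrdF := ℋ.filter (fun H => (pts H).card = d) with hOrdF
  have hOrdSet : {H : Submodule ℝ (Fin (d+1) → ℝ) | finrank ℝ ↥H = d ∧
      {p ∈ (S : Set (Projectivization ℝ (Fin (d+1) → ℝ))) | p.submodule ≤ H}.ncard = d}
      = ↑OrdF := by
    ext H
    have hset : {p ∈ (S : Set (Projectivization ℝ (Fin (d+1) → ℝ))) | p.submodule ≤ H}
        = ↑(pts H) := by
      ext p; simp [hpts]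
    have hnc : {p ∈ (S : Set (Projectivization ℝ (Fin (d+1) → ℝ))) | p.submodule ≤ H}.ncard
        = (pts H).card := by rw [hset, Set.ncard_coe_finset]
    simp only [Set.mem_setOf_eq]
    rw [hnc]
    simp only [hOrdF, Finset.mem_coe, Finset.mem_filter]
    constructor
    · rintro ⟨h1, h2⟩
      exact ⟨Finset.mem_image.mpr ⟨pts H, Finset.mem_powersetCard.mpr ⟨hsub H, h2⟩,
        hspanEq H h1 (pts H) subset_rfl h2⟩, h2⟩
    · rintro ⟨hH, h2⟩
      exact ⟨hrank H hH, h2⟩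
  rw [hOrdSet, Set.ncard_coe_finset]
  set Bad := ℋ.filter (fun H => ¬ (pts H).card = d) with hBad
  have hq1 : (n.choose d : ℚ) = OrdF.card + ∑ H ∈ Bad, (((pts H).card.choose d : ℕ) : ℚ) := by
    have h0 : (n.choose d : ℚ) = ∑ H ∈ ℋ, (((pts H).card.choose d : ℕ) : ℚ) := by
      exact_mod_cast hAcard
    rw [h0, ← Finset.sum_filter_add_sum_filter_not ℋ (fun H => (pts H).card = d)
      (fun H => (((pts H).card.choose d : ℕ) : ℚ))]
    congr 1
    calc ∑ H ∈ OrdF, (((pts H).card.choose d : ℕ) : ℚ) = ∑ _H ∈ OrdF, (1:ℚ) := by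
          refine Finset.sum_congr rfl fun H hH => ?_
          rw [(Finset.mem_filter.mp hH).2, Nat.choose_self]; norm_num
      _ = OrdF.card := by simp
  suffices hs : ∑ H ∈ Bad, (((pts H).card.choose d : ℕ) : ℚ)
      ≤ ((d:ℚ)+1)/((d:ℚ)+2) * (n.choose (d+1) : ℚ) by linarith
  rcases Finset.eq_empty_or_nonempty Bad with hBe | ⟨H0, hH0⟩
  · rw [hBe, Finset.sum_empty]; positivity
  · have hH0ℋ := (Finset.mem_filter.mp hH0).1
    have hn2 : d + 2 ≤ n := by
      have h1 := hdle _ hH0ℋ; have h2 := hlt _ hH0ℋ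
      have h3 := (Finset.mem_filter.mp hH0).2; omega
    have hqnonneg : (0:ℚ) ≤ ((d:ℚ)+1)/((n - (d+1) : ℕ) : ℚ) := by positivity
    calc ∑ H ∈ Bad, (((pts H).card.choose d : ℕ) : ℚ)
        ≤ ∑ H ∈ Bad, ((d:ℚ)+1)/((n - (d+1) : ℕ) : ℚ) * ((n - (pts H).card : ℕ) : ℚ)
            * ((pts H).card.choose (d+1) : ℚ) := by
          refine Finset.sum_le_sum fun H hH => ?_
          have h1 := hdle _ (Finset.mem_filter.mp hH).1
          have h2 := hlt _ (Finset.mem_filter.mp hH).1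
          have h3 := (Finset.mem_filter.mp hH).2
          exact stmt4_ptwise d _ n (by omega) (by omega)
      _ = ((d:ℚ)+1)/((n - (d+1) : ℕ) : ℚ) * ∑ H ∈ Bad, ((n - (pts H).card : ℕ) : ℚ)
            * ((pts H).card.choose (d+1) : ℚ) := by
          rw [Finset.mul_sum]
          exact Finset.sum_congr rfl fun H _ => by ring
      _ ≤ ((d:ℚ)+1)/((n - (d+1) : ℕ) : ℚ) * ∑ H ∈ ℋ, ((n - (pts H).card : ℕ) : ℚ)
            * ((pts H).card.choose (d+1) : ℚ) := by
          refine mul_le_mul_of_nonneg_left ?_ hqnonneg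
          exact Finset.sum_le_sum_of_subset_of_nonneg (Finset.filter_subset _ _)
            (fun H _ _ => by positivity)
      _ ≤ ((d:ℚ)+1)/((n - (d+1) : ℕ) : ℚ) * (n.choose (d+2) : ℚ) := by
          refine mul_le_mul_of_nonneg_left ?_ hqnonneg
          calc ∑ H ∈ ℋ, ((n - (pts H).card : ℕ) : ℚ) * ((pts H).card.choose (d+1) : ℚ)
              = ((∑ H ∈ ℋ, ((pts H).card.choose (d+1)) * (n - (pts H).card) : ℕ) : ℚ) := by
                push_cast
                exact Finset.sum_congr rfl fun H _ => by ring
            _ ≤ _ := by exact_mod_cast hB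
      _ = ((d:ℚ)+1)/((d:ℚ)+2) * (n.choose (d+1) : ℚ) := stmt4_scale d n hn2
end

section
/- For even d ≥ 2, e_d(d+3) = binomial(d+2, 3); that is, the minimum number of ordinary hyperplanes spanned by a set of d+3 points in PG(d,ℝ), every d of which span a hyperplane and spanning the whole space, equals binomial(d+2,3). -/
open Module

/-- The number of ordinary hyperplanes (hyperplanes containing exactly `d` points) of a
finite set of points of `PG(d,ℝ)`. -/
noncomputable def ordinaryCount (d : ℕ) (S : Finset (Projectivization ℝ (Fin (d+1) → ℝ))) : ℕ :=
  {H : Submodule ℝ (Fin (d+1) → ℝ) | finrank ℝ ↥H = d ∧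
    {p ∈ (S : Set (Projectivization ℝ (Fin (d+1) → ℝ))) | p.submodule ≤ H}.ncard = d}.ncard

/-- `e d n` : the minimum number of ordinary hyperplanes over all sets of `n` points of
`PG(d,ℝ)` such that every `d` points span a hyperplane and the points span the whole space. -/
noncomputable def e (d n : ℕ) : ℕ :=
  sInf { N | ∃ S : Finset (Projectivization ℝ (Fin (d+1) → ℝ)), S.card = n ∧
    (∀ T ⊆ S, T.card = d →
      finrank ℝ ↥(⨆ p ∈ T, Projectivization.submodule p) = d) ∧
    (⨆ p ∈ S, Projectivization.submodule p) = ⊤ ∧ N = ordinaryCount d S }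

/-!
Let `S` be `d + 3` points of `PG(d, ℝ)`, every `d` of which span a hyperplane. Each `d`-subset
spans exactly one hyperplane, so counting `d`-subsets by the hyperplane they span gives
`τ_d + (d + 1) τ_{d+1} + C(d + 2, 2) τ_{d+2} = C(d + 3, 3)`, where `τ_i` is the number of
spanned hyperplanes through exactly `i` points. Two spanned hyperplanes share fewer than `d`
points. Hence a hyperplane through `d + 2` points is the only one through more than `d`, and then
`τ_d = C(d + 2, 3)`; otherwise the hyperplanes through `d + 1` points miss pairwise disjoint pairs
of points, so `2 τ_{d+1} ≤ d + 3`, i.e. `τ_{d+1} ≤ (d + 2) / 2` for even `d`, and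
`τ_d ≥ C(d + 2, 3)`. Equality is attained by a cone: `d + 2` points of a moment curve in a
hyperplane together with a point off it.
-/

lemma choose_add_three (k : ℕ) : (k + 3).choose k = (k + 2).choose 2 + (k + 2).choose 3 := by
  rw [Nat.choose_symm_add]
  exact Nat.choose_succ_succ' (k + 2) 2

noncomputable section

open Finset
open scoped LinearAlgebra.Projectivization Classical

namespace PointConfiguration

variable {K V : Type*} [Field K] [AddCommGroup V] [Module K V]

def span (T : Finset (ℙ K V)) : Submodule K V := ⨆ p ∈ T, p.submodule

def pointsIn (S : Finset (ℙ K V)) (W : Submodule K V) : Finset (ℙ K V) :=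
  S.filter (·.submodule ≤ W)

def IndepOfCard (k : ℕ) (S : Finset (ℙ K V)) : Prop :=
  ∀ T ⊆ S, #T = k → finrank K (span T) = k

def spanned (k : ℕ) (S : Finset (ℙ K V)) : Finset (Submodule K V) :=
  (S.powersetCard k).image span

def ordinary (k : ℕ) (S : Finset (ℙ K V)) : Finset (Submodule K V) :=
  (spanned k S).filter fun H => #(pointsIn S H) = k

def rich (k : ℕ) (S : Finset (ℙ K V)) : Finset (Submodule K V) :=
  (spanned k S).filter fun H => k < #(pointsIn S H)

section Span

variable {S T T' B : Finset (ℙ K V)} {W : Submodule K V} {p a : ℙ K V}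

lemma span_le_iff : span T ≤ W ↔ ∀ p ∈ T, p.submodule ≤ W := iSup₂_le_iff

lemma submodule_le_span (hp : p ∈ T) : p.submodule ≤ span T :=
  le_iSup₂ (f := fun p _ => p.submodule) p hp

lemma span_mono (h : T ⊆ T') : span T ≤ span T' :=
  span_le_iff.mpr fun _ hp => submodule_le_span (h hp)

lemma span_empty : span (∅ : Finset (ℙ K V)) = ⊥ := by simp [span]

lemma span_insert : span (insert p T) = p.submodule ⊔ span T :=
  Finset.iSup_insert _ _ _

lemma span_union : span (T ∪ T') = span T ⊔ span T' :=
  Finset.iSup_union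

lemma span_pointsIn_le : span (pointsIn S W) ≤ W :=
  span_le_iff.mpr fun _ hp => (mem_filter.mp hp).2

lemma pointsIn_subset : pointsIn S W ⊆ S := filter_subset _ _

lemma pointsIn_insert_eq (hBW : ∀ p ∈ B, p.submodule ≤ W) (ha : ¬ a.submodule ≤ W) :
    pointsIn (insert a B) W = B := by
  rw [pointsIn, filter_insert, if_neg ha, filter_true_of_mem hBW]

lemma span_image_mk {ι : Type*} (f : ι → V) (hf : ∀ i, f i ≠ 0) (T : Finset ι) :
    span (T.image fun i => Projectivization.mk K (f i) (hf i)) = Submodule.span K (f '' T) := by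
  refine le_antisymm (span_le_iff.mpr ?_) (Submodule.span_le.mpr ?_)
  · simp only [mem_image, forall_exists_index, and_imp]
    rintro _ i hi rfl
    rw [Projectivization.submodule_mk, Submodule.span_singleton_le_iff_mem]
    exact Submodule.subset_span ⟨i, hi, rfl⟩
  · rintro _ ⟨i, hi, rfl⟩
    refine submodule_le_span (mem_image_of_mem _ hi) ?_
    rw [Projectivization.submodule_mk]
    exact Submodule.mem_span_singleton_self _

variable [FiniteDimensional K V]

lemma finrank_span_le_card (T : Finset (ℙ K V)) : finrank K (span T) ≤ #T := by
  induction T using Finset.induction_on with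
  | empty => rw [span_empty, finrank_bot, card_empty]
  | insert p T hp ih =>
    rw [span_insert, card_insert_of_notMem hp]
    have := Submodule.finrank_add_le_finrank_add_finrank p.submodule (span T)
    rw [Projectivization.finrank_submodule] at this
    omega

lemma finrank_sup_of_not_le (hp : ¬ p.submodule ≤ W) :
    finrank K ↥(p.submodule ⊔ W) = finrank K W + 1 := by
  have hdisj : p.submodule ⊓ W = ⊥ := by
    rw [← disjoint_iff, disjoint_comm, Projectivization.submodule_eq,
      Submodule.disjoint_span_singleton' p.rep_nonzero]
    rwa [Projectivization.submodule_eq, Submodule.span_singleton_le_iff_mem] at hp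
  have := Submodule.finrank_sup_add_finrank_inf_eq p.submodule W
  rw [hdisj, finrank_bot, Projectivization.finrank_submodule] at this
  omega

end Span

namespace IndepOfCard

variable {k : ℕ} {S B T : Finset (ℙ K V)} {H H' W : Submodule K V} {a : ℙ K V}

lemma finrank_of_mem_spanned (hS : IndepOfCard k S) (hH : H ∈ spanned k S) :
    finrank K H = k := by
  obtain ⟨T, hT, rfl⟩ := mem_image.mp hH
  exact hS T (mem_powersetCard.mp hT).1 (mem_powersetCard.mp hT).2

lemma card_pointsIn_lt (hS : IndepOfCard k S) (hV : finrank K V = k + 1) (hspan : span S = ⊤)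
    (hH : H ∈ spanned k S) : #(pointsIn S H) < #S := by
  by_contra! h
  have hHtop : H = ⊤ := by
    rw [eq_top_iff, ← hspan, ← eq_of_subset_of_card_le pointsIn_subset h]
    exact span_pointsIn_le
  have := hS.finrank_of_mem_spanned hH
  rw [hHtop, finrank_top] at this
  omega

variable [FiniteDimensional K V]

lemma span_eq_of_le (hS : IndepOfCard k S) (hTS : T ⊆ S) (hT : #T = k) (hTH : span T ≤ H)
    (hH : finrank K H = k) : span T = H :=
  Submodule.eq_of_le_of_finrank_le hTH (by rw [hH, hS T hTS hT])

lemma subset_pointsIn_iff (hS : IndepOfCard k S) (hTS : T ⊆ S) (hT : #T = k)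
    (hH : H ∈ spanned k S) : T ⊆ pointsIn S H ↔ span T = H := by
  refine ⟨fun h => hS.span_eq_of_le hTS hT ((span_mono h).trans span_pointsIn_le)
    (hS.finrank_of_mem_spanned hH), ?_⟩
  rintro rfl p hp
  exact mem_filter.mpr ⟨hTS hp, submodule_le_span hp⟩

lemma mem_ordinary_iff (hS : IndepOfCard k S) :
    H ∈ ordinary k S ↔ finrank K H = k ∧ #(pointsIn S H) = k := by
  refine ⟨fun hH => ⟨hS.finrank_of_mem_spanned (mem_filter.mp hH).1, (mem_filter.mp hH).2⟩,
    fun ⟨hH, hk⟩ => mem_filter.mpr ⟨?_, hk⟩⟩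
  rw [← hS.span_eq_of_le pointsIn_subset hk span_pointsIn_le hH]
  exact mem_image_of_mem _ (mem_powersetCard.mpr ⟨pointsIn_subset, hk⟩)

lemma le_card_pointsIn (hS : IndepOfCard k S) (hH : H ∈ spanned k S) :
    k ≤ #(pointsIn S H) := by
  obtain ⟨T, hT, rfl⟩ := mem_image.mp hH
  obtain ⟨hTS, hTk⟩ := mem_powersetCard.mp hT
  rw [← hTk]
  exact card_le_card ((hS.subset_pointsIn_iff hTS hTk hH).mpr rfl)

lemma eq_of_le_card_inter (hS : IndepOfCard k S) (hH : H ∈ spanned k S)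
    (hH' : H' ∈ spanned k S) (h : k ≤ #(pointsIn S H ∩ pointsIn S H')) : H = H' := by
  obtain ⟨T, hT, hTk⟩ := exists_subset_card_eq h
  have hTS : T ⊆ S := hT.trans (inter_subset_left.trans pointsIn_subset)
  rw [← (hS.subset_pointsIn_iff hTS hTk hH).mp (hT.trans inter_subset_left),
    (hS.subset_pointsIn_iff hTS hTk hH').mp (hT.trans inter_subset_right)]

lemma eq_of_card_add_card_le (hS : IndepOfCard k S) (hH : H ∈ spanned k S)
    (hH' : H' ∈ spanned k S) {U : Finset (ℙ K V)} (hU : pointsIn S H ∪ pointsIn S H' ⊆ U)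
    (h : #U + k ≤ #(pointsIn S H) + #(pointsIn S H')) : H = H' := by
  refine hS.eq_of_le_card_inter hH hH' ?_
  have := card_union_add_card_inter (pointsIn S H) (pointsIn S H')
  have := card_le_card hU
  omega

lemma sum_choose_card_pointsIn (hS : IndepOfCard k S) :
    ∑ H ∈ spanned k S, (#(pointsIn S H)).choose k = (#S).choose k := by
  rw [← card_powersetCard, card_eq_sum_card_fiberwise fun T hT => mem_image_of_mem span hT]
  refine sum_congr rfl fun H hH => ?_
  rw [← card_powersetCard]
  congr 1
  ext T
  simp only [mem_filter, mem_powersetCard]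
  constructor
  · rintro ⟨hT, hTk⟩
    have hTS := hT.trans pointsIn_subset
    exact ⟨⟨hTS, hTk⟩, (hS.subset_pointsIn_iff hTS hTk hH).mp hT⟩
  · rintro ⟨⟨hTS, hTk⟩, rfl⟩
    exact ⟨(hS.subset_pointsIn_iff hTS hTk hH).mpr rfl, hTk⟩

lemma card_ordinary_add_sum_rich (hS : IndepOfCard k S) :
    #(ordinary k S) + ∑ H ∈ rich k S, (#(pointsIn S H)).choose k = (#S).choose k := by
  rw [← hS.sum_choose_card_pointsIn, ← sum_filter_add_sum_filter_not (spanned k S)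
    (fun H => #(pointsIn S H) = k)]
  congr 1
  · rw [card_eq_sum_ones, ordinary]
    exact sum_congr rfl fun H hH => by rw [(mem_filter.mp hH).2, Nat.choose_self]
  · refine sum_congr (filter_congr fun H hH => ?_) fun _ _ => rfl
    have := hS.le_card_pointsIn hH
    omega

/-- Extend `T` to `k` points of `B`: the `k - #T` added points raise the rank by at most one
each, and the rank reaches `k`. -/
lemma finrank_span_of_card_le (hB : IndepOfCard k B) (hkB : k ≤ #B) (hTB : T ⊆ B)
    (hTk : #T ≤ k) : finrank K (span T) = #T := by
  obtain ⟨T', hTT', hT'B, hT'k⟩ := exists_subsuperset_card_eq hTB hTk hkB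
  have hsup := Submodule.finrank_add_le_finrank_add_finrank (span T) (span (T' \ T))
  rw [← span_union, union_sdiff_of_subset hTT', hB T' hT'B hT'k] at hsup
  have := finrank_span_le_card (T' \ T)
  rw [card_sdiff_of_subset hTT'] at this
  have := finrank_span_le_card T
  omega

lemma exists_span_eq (hB : IndepOfCard k B) (hkB : k ≤ #B) (hBW : ∀ p ∈ B, p.submodule ≤ W)
    (hW : finrank K W = k) : ∃ T ⊆ B, #T = k ∧ span T = W := by
  obtain ⟨T, hTB, hTk⟩ := exists_subset_card_eq hkB
  exact ⟨T, hTB, hTk,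
    hB.span_eq_of_le hTB hTk (span_le_iff.mpr fun p hp => hBW p (hTB hp)) hW⟩

lemma insert (hB : IndepOfCard k B) (hkB : k ≤ #B) (hBW : ∀ p ∈ B, p.submodule ≤ W)
    (ha : ¬ a.submodule ≤ W) : IndepOfCard k (insert a B) := by
  intro T hT hTk
  by_cases haT : a ∈ T
  · have hT' : T.erase a ⊆ B := fun p hp =>
      (mem_insert.mp (hT (mem_of_mem_erase hp))).resolve_left (ne_of_mem_erase hp)
    have ha' : ¬ a.submodule ≤ span (T.erase a) := fun h =>
      ha (h.trans ((span_mono hT').trans (span_le_iff.mpr hBW)))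
    have := card_erase_of_mem haT
    rw [← insert_erase haT, span_insert, finrank_sup_of_not_le ha',
      hB.finrank_span_of_card_le hkB hT' (by omega)]
    have := card_pos.mpr ⟨a, haT⟩
    omega
  · exact hB T (fun p hp => (mem_insert.mp (hT hp)).resolve_left (ne_of_mem_of_not_mem hp haT))
      hTk

section CardAddThree

variable (hcard : #S = k + 3)
include hcard

lemma rich_eq_singleton (hS : IndepOfCard k S) {H₀ : Submodule K V} (hH₀ : H₀ ∈ spanned k S)
    (h₀ : #(pointsIn S H₀) = k + 2) : rich k S = {H₀} := by
  ext H
  simp only [rich, mem_filter, mem_singleton]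
  constructor
  · rintro ⟨hH, hk⟩
    exact hS.eq_of_card_add_card_le hH hH₀ (union_subset pointsIn_subset pointsIn_subset)
      (by omega)
  · rintro rfl
    exact ⟨hH₀, by omega⟩

/-- The complements of distinct rich subspaces are disjoint: a point missed by both would
leave them `k` common points. -/
lemma two_mul_card_rich_le (hS : IndepOfCard k S)
    (hrich : ∀ H ∈ rich k S, #(pointsIn S H) = k + 1) : 2 * #(rich k S) ≤ k + 3 := by
  have hdisj : (rich k S : Set (Submodule K V)).PairwiseDisjoint (S \ pointsIn S ·) := by
    intro H hH H' hH' hne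
    refine disjoint_left.mpr fun x hx hx' => hne ?_
    refine hS.eq_of_card_add_card_le (mem_filter.mp hH).1 (mem_filter.mp hH').1
      (U := S.erase x) ?_ ?_
    · intro y hy
      refine mem_erase.mpr ⟨?_, union_subset pointsIn_subset pointsIn_subset hy⟩
      rintro rfl
      exact (mem_union.mp hy).elim (mem_sdiff.mp hx).2 (mem_sdiff.mp hx').2
    · rw [card_erase_of_mem (mem_sdiff.mp hx).1, hrich H hH, hrich H' hH']
      omega
  calc 2 * #(rich k S) = ∑ H ∈ rich k S, #(S \ pointsIn S H) := by
        rw [mul_comm, ← smul_eq_mul, ← sum_const]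
        refine sum_congr rfl fun H hH => ?_
        rw [card_sdiff_of_subset pointsIn_subset, hrich H hH]
        omega
    _ = #((rich k S).biUnion (S \ pointsIn S ·)) := (card_biUnion hdisj).symm
    _ ≤ #S := card_le_card (biUnion_subset.mpr fun _ _ => sdiff_subset)
    _ = k + 3 := hcard

lemma card_ordinary_of_card_pointsIn_eq (hS : IndepOfCard k S) {H₀ : Submodule K V}
    (hH₀ : H₀ ∈ spanned k S) (h₀ : #(pointsIn S H₀) = k + 2) :
    #(ordinary k S) = (k + 2).choose 3 := by
  have hid := hS.card_ordinary_add_sum_rich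
  rw [hS.rich_eq_singleton hcard hH₀ h₀, sum_singleton, h₀, hcard, choose_add_three,
    Nat.choose_symm_add] at hid
  omega

/-- Without a subspace through `k + 2` points, every rich subspace contributes `k + 1`, and
there are at most `k / 2 + 1` of them since `k` is even. -/
lemma choose_le_card_ordinary (hS : IndepOfCard k S) (hV : finrank K V = k + 1)
    (hspan : span S = ⊤) (hk : Even k) : (k + 2).choose 3 ≤ #(ordinary k S) := by
  by_cases h : ∃ H ∈ spanned k S, #(pointsIn S H) = k + 2
  · obtain ⟨H₀, hH₀, h₀⟩ := h
    exact (hS.card_ordinary_of_card_pointsIn_eq hcard hH₀ h₀).ge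
  push Not at h
  have hrich : ∀ H ∈ rich k S, #(pointsIn S H) = k + 1 := fun H hH => by
    have hH := mem_filter.mp hH
    have := hS.card_pointsIn_lt hV hspan hH.1
    have := h H hH.1
    omega
  have hid := hS.card_ordinary_add_sum_rich
  rw [sum_congr rfl fun H hH => by rw [hrich H hH, Nat.choose_succ_self_right], sum_const,
    smul_eq_mul, hcard, choose_add_three] at hid
  have hpair : (k + 2) * (k + 1) = (k + 2).choose 2 * 2 := by
    simpa using Nat.add_one_mul_choose_eq (k + 1) 1
  have hrich_le := hS.two_mul_card_rich_le hcard hrich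
  obtain ⟨j, rfl⟩ := hk
  have hr : #(rich (j + j) S) ≤ j + 1 := by omega
  have hC : (j + j + 2).choose 2 = (j + 1) * (j + j + 1) := by linarith
  have := Nat.mul_le_mul_right (j + j + 1) hr
  linarith

end CardAddThree

end IndepOfCard

section Cone

variable [FiniteDimensional K V] {k : ℕ} {B : Finset (ℙ K V)} {W : Submodule K V} {a : ℙ K V}

lemma span_insert_eq_top (hV : finrank K V = k + 1) (hB : IndepOfCard k B) (hkB : k ≤ #B)
    (hBW : ∀ p ∈ B, p.submodule ≤ W) (hW : finrank K W = k) (ha : ¬ a.submodule ≤ W) :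
    span (insert a B) = ⊤ := by
  obtain ⟨T, hTB, -, rfl⟩ := hB.exists_span_eq hkB hBW hW
  have : a.submodule ⊔ span T = ⊤ :=
    Submodule.eq_top_of_finrank_eq (by rw [finrank_sup_of_not_le ha, hW, hV])
  rw [eq_top_iff, ← this, ← span_insert]
  exact span_mono (insert_subset_insert a hTB)

lemma card_ordinary_insert (hB : IndepOfCard k B) (hBcard : #B = k + 2)
    (hBW : ∀ p ∈ B, p.submodule ≤ W) (hW : finrank K W = k) (ha : ¬ a.submodule ≤ W) :
    #(ordinary k (insert a B)) = (k + 2).choose 3 := by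
  have hkB : k ≤ #B := by omega
  obtain ⟨T, hTB, hTk, hTW⟩ := hB.exists_span_eq hkB hBW hW
  have hWmem : W ∈ spanned k (insert a B) :=
    hTW ▸ mem_image_of_mem span (mem_powersetCard.mpr ⟨hTB.trans (subset_insert a B), hTk⟩)
  refine (hB.insert hkB hBW ha).card_ordinary_of_card_pointsIn_eq ?_ hWmem ?_
  · rw [card_insert_of_notMem fun h => ha (hBW a h), hBcard]
  · rw [pointsIn_insert_eq hBW ha, hBcard]

end Cone

section MomentCurve

variable {K : Type*} [Field K] {d : ℕ}

variable (K d) in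
/-- `x ↦ (x, 0)`; its range is the hyperplane `x_d = 0`. -/
def extendLast : (Fin d → K) →ₗ[K] Fin (d + 1) → K :=
  Function.ExtendByZero.linearMap K Fin.castSucc

lemma extendLast_castSucc (x : Fin d → K) (i : Fin d) : extendLast K d x i.castSucc = x i :=
  Fin.castSucc_injective d |>.extend_apply x 0 i

lemma extendLast_last (x : Fin d → K) : extendLast K d x (Fin.last d) = 0 :=
  Function.extend_apply' _ _ _ fun ⟨i, hi⟩ => Fin.castSucc_ne_last i hi

lemma extendLast_injective : Function.Injective (extendLast K d) := fun x y h =>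
  funext fun i => by rw [← extendLast_castSucc x, ← extendLast_castSucc y, h]

lemma finrank_range_extendLast : finrank K (LinearMap.range (extendLast K d)) = d := by
  rw [LinearMap.finrank_range_of_inj extendLast_injective, finrank_fin_fun]

lemma single_last_notMem_range_extendLast :
    Pi.single (Fin.last d) 1 ∉ LinearMap.range (extendLast K d) := by
  rintro ⟨x, hx⟩
  simpa [extendLast_last] using congrFun hx (Fin.last d)

variable (d) in
/-- The point `(1, t, …, t^(d-1), 0)`. -/
def momentVec (t : K) : Fin (d + 1) → K := extendLast K d fun i => t ^ (i : ℕ)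

lemma momentVec_castSucc (t : K) (i : Fin d) : momentVec d t i.castSucc = t ^ (i : ℕ) :=
  extendLast_castSucc _ i

lemma momentVec_ne_zero (hd : 0 < d) (t : K) : momentVec d t ≠ 0 := fun h => by
  have h0 := congrFun h (Fin.castSucc ⟨0, hd⟩)
  rw [momentVec_castSucc] at h0
  simp at h0

lemma finrank_span_momentVec {T : Finset K} (hT : #T = d) :
    finrank K (Submodule.span K (momentVec d '' (T : Set K))) = d := by
  set e : Fin d ≃ T := (T.equivFin.trans (finCongr hT)).symm
  have hv : Function.Injective fun i => (e i : K) :=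
    Subtype.coe_injective.comp e.injective
  have hrows : LinearIndependent K (Matrix.vandermonde fun i => (e i : K)).row :=
    Matrix.linearIndependent_rows_iff_isUnit.mpr <| (Matrix.isUnit_iff_isUnit_det _).mpr <|
      isUnit_iff_ne_zero.mpr <| Matrix.det_vandermonde_ne_zero_iff.mpr hv
  have hli : LinearIndependent K fun i => momentVec d (e i : K) :=
    hrows.map' _ (LinearMap.ker_eq_bot.mpr extendLast_injective)
  have himage : Set.range (fun i => momentVec d (e i : K)) = momentVec d '' (T : Set K) := by
    rw [← Function.comp_def, Set.range_comp]
    exact congrArg _ ((e.surjective.range_comp Subtype.val).trans Subtype.range_coe)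
  rw [← himage, finrank_span_eq_card hli, Fintype.card_fin]

/-- The first two coordinates of `momentVec d t` are `1` and `t`, so its projective point
determines `t`. -/
lemma mk_momentVec_injective (hd : 2 ≤ d) :
    Function.Injective fun t : K => Projectivization.mk K (momentVec d t)
      (momentVec_ne_zero (by omega) t) := by
  intro s t h
  obtain ⟨c, hc⟩ := (Projectivization.mk_eq_mk_iff' K _ _ _ _).mp h
  have h0 := congrFun hc (Fin.castSucc ⟨0, by omega⟩)
  have h1 := congrFun hc (Fin.castSucc ⟨1, by omega⟩)
  simp only [Pi.smul_apply, momentVec_castSucc, smul_eq_mul, pow_zero, mul_one, pow_one] at h0 h1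
  rw [h0, one_mul] at h1
  exact h1.symm

lemma exists_cone [Infinite K] (hd : 2 ≤ d) :
    ∃ S : Finset (ℙ K (Fin (d + 1) → K)), #S = d + 3 ∧ IndepOfCard d S ∧ span S = ⊤ ∧
      #(ordinary d S) = (d + 2).choose 3 := by
  obtain ⟨P, hP⟩ := Infinite.exists_subset_card_eq K (d + 2)
  set B := P.image fun t => Projectivization.mk K (momentVec d t) (momentVec_ne_zero (by omega) t)
  set W := LinearMap.range (extendLast K d)
  set a := Projectivization.mk K (Pi.single (Fin.last d) 1 : Fin (d + 1) → K) (by simp)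
  have hBcard : #B = d + 2 := by rw [card_image_of_injective _ (mk_momentVec_injective hd), hP]
  have hB : IndepOfCard d B := by
    intro T hT hTk
    obtain ⟨T', -, rfl⟩ := subset_image_iff.mp hT
    rw [card_image_of_injective _ (mk_momentVec_injective hd)] at hTk
    rw [span_image_mk, finrank_span_momentVec hTk]
  have hBW : ∀ p ∈ B, p.submodule ≤ W := by
    simp only [B, mem_image]
    rintro _ ⟨t, -, rfl⟩
    rw [Projectivization.submodule_mk, Submodule.span_singleton_le_iff_mem]
    exact LinearMap.mem_range_self _ _
  have ha : ¬ a.submodule ≤ W := by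
    rw [Projectivization.submodule_mk, Submodule.span_singleton_le_iff_mem]
    exact single_last_notMem_range_extendLast
  exact ⟨insert a B, by rw [card_insert_of_notMem fun h => ha (hBW a h), hBcard],
    hB.insert (by omega) hBW ha,
    span_insert_eq_top (finrank_fin_fun K) hB (by omega) hBW finrank_range_extendLast ha,
    card_ordinary_insert hB hBcard hBW finrank_range_extendLast ha⟩

end MomentCurve

lemma ordinaryCount_eq_card_ordinary {d : ℕ} {S : Finset (ℙ ℝ (Fin (d + 1) → ℝ))}
    (hS : IndepOfCard d S) : ordinaryCount d S = #(ordinary d S) := by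
  rw [ordinaryCount, ← Set.ncard_coe_finset (ordinary d S)]
  congr 1
  ext H
  rw [Set.mem_ofPred_eq, mem_coe, hS.mem_ordinary_iff, pointsIn, ← Set.ncard_coe_finset,
    coe_filter]
  rfl

end PointConfiguration

end

open PointConfiguration in
theorem stmt7 (d : ℕ) (heven : Even d) (hd : 2 ≤ d) :
    e d (d + 3) = (d + 2).choose 3 := by
  obtain ⟨S, hcard, hS, hspan, hord⟩ := exists_cone (K := ℝ) hd
  refine le_antisymm (Nat.sInf_le ⟨S, hcard, hS, hspan, ?_⟩)
    (le_csInf ⟨_, S, hcard, hS, hspan, rfl⟩ ?_)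
  · rw [ordinaryCount_eq_card_ordinary hS, hord]
  · rintro N ⟨S', hcard', hS', hspan', rfl⟩
    rw [ordinaryCount_eq_card_ordinary hS']
    exact IndepOfCard.choose_le_card_ordinary hcard' hS' (finrank_fin_fun ℝ) hspan' heven
end

section
/- For d ≥ 3 and n ≥ d+1, e_d(n) ≥ (n/d)·e_{d−1}(n−1), where e_d(n) is the minimum number of ordinary hyperplanes spanned by a set of n points in PG(d,ℝ) every d of which span a hyperplane and not all contained in a hyperplane. -/
open Module

namespace Stmt14Aux

open Module Submodule Set


variable {V : Type*} [AddCommGroup V] [Module ℝ V]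

lemma rep_injective : Function.Injective (Projectivization.rep : Projectivization ℝ V → V) :=
  fun _ _ h => Quotient.out_inj.mp (Subtype.ext h)

lemma biSup_span {α : Type*} (s : Finset α) (g : α → V) :
    (⨆ a ∈ s, span ℝ {g a}) = span ℝ (g '' (s : Set α)) := by
  rw [Set.image_eq_iUnion, Submodule.span_iUnion₂]
  simp

lemma biSup_submodule (T : Finset (Projectivization ℝ V)) :
    (⨆ p ∈ T, Projectivization.submodule p)
      = span ℝ (Projectivization.rep '' (T : Set (Projectivization ℝ V))) := by
  rw [← biSup_span]
  exact biSup_congr fun p _ => p.submodule_eq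

lemma b1 (T : Finset (Projectivization ℝ V)) :
    finrank ℝ ↥(⨆ p ∈ T, Projectivization.submodule p) = T.card ↔
      LinearIndependent ℝ (fun p : (T : Set (Projectivization ℝ V)) => (p : Projectivization ℝ V).rep) := by
  rw [biSup_submodule, linearIndependent_iff_card_eq_finrank_span,
    Set.finrank, ← Set.image_eq_range, eq_comm]
  simp

lemma finrank_map_add [FiniteDimensional ℝ V] {W : Type*} [AddCommGroup W] [Module ℝ W]
    (π : V →ₗ[ℝ] W) (U : Submodule ℝ V) :
    finrank ℝ ↥(U.map π) + finrank ℝ ↥(U ⊓ LinearMap.ker π) = finrank ℝ ↥U := by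
  have h := LinearMap.finrank_range_add_finrank_ker (π.domRestrict U)
  rwa [LinearMap.range_domRestrict, LinearMap.ker_domRestrict,
    ← Submodule.finrank_map_subtype_eq U (comap U.subtype (LinearMap.ker π)),
    Submodule.map_comap_subtype] at h


lemma li_moment (m : ℕ) (s : Finset ℕ) (hs : s.card ≤ m) :
    LinearIndependent ℝ (fun j : (s : Set ℕ) => fun i : Fin m => ((j : ℕ) : ℝ) ^ (i : ℕ)) := by
  obtain ⟨s', hsub, hcard⟩ := Infinite.exists_superset_card_eq s m hs
  set σ : Fin m → ℕ := fun i => (s'.orderIsoOfFin hcard i : ℕ) with hσ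
  have hσmono : StrictMono σ := fun i j h => by
    exact_mod_cast (s'.orderIsoOfFin hcard).strictMono h
  have hdet : (Matrix.vandermonde (fun i => (σ i : ℝ))).det ≠ 0 := by
    rw [Matrix.det_vandermonde]
    refine Finset.prod_ne_zero_iff.mpr fun i _ => Finset.prod_ne_zero_iff.mpr fun j hj => ?_
    have h1 : σ i < σ j := hσmono (Finset.mem_Ioi.mp hj)
    have h2 : ((σ i : ℕ) : ℝ) < ((σ j : ℕ) : ℝ) := by exact_mod_cast h1
    intro h; rw [sub_eq_zero] at h; exact h2.ne' h
  have hrows : LinearIndependent ℝ (fun i : Fin m => Matrix.vandermonde (fun i => (σ i : ℝ)) i) :=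
    Matrix.linearIndependent_rows_iff_isUnit.mpr
      ((Matrix.isUnit_iff_isUnit_det _).mpr (isUnit_iff_ne_zero.mpr hdet))
  set φ : ↥(↑s : Set ℕ) → Fin m := fun j => (s'.orderIsoOfFin hcard).symm ⟨(j : ℕ), hsub j.2⟩ with hφ
  have hφinj : Function.Injective φ := by
    intro a b h
    have h2 := congrArg (s'.orderIsoOfFin hcard) h
    rw [hφ, OrderIso.apply_symm_apply, OrderIso.apply_symm_apply] at h2
    exact Subtype.ext (by simpa using h2)
  have hcomp := hrows.comp φ hφinj
  convert hcomp using 1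
  funext j
  show (fun i : Fin m => ((j : ℕ) : ℝ) ^ (i : ℕ)) = _
  funext i
  show ((j : ℕ) : ℝ) ^ (i : ℕ) = (σ (φ j) : ℝ) ^ (i : ℕ)
  have hj : σ (φ j) = (j : ℕ) := by
    rw [hσ, hφ]
    simp only [OrderIso.apply_symm_apply]
  rw [hj]

lemma exists_config (m n : ℕ) (hm : 2 ≤ m) (hn : m ≤ n) :
    ∃ S : Finset (Projectivization ℝ (Fin m → ℝ)), S.card = n ∧
      (∀ T ⊆ S, T.card ≤ m → finrank ℝ ↥(⨆ p ∈ T, Projectivization.submodule p) = T.card) ∧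
      (⨆ p ∈ S, Projectivization.submodule p) = ⊤ := by
  classical
  set w : ℕ → (Fin m → ℝ) := fun t i => (t : ℝ) ^ (i : ℕ) with hw
  have hw0 : ∀ t, w t ≠ 0 := by
    intro t h
    have := congrFun h ⟨0, by omega⟩
    simp [hw] at this
  have hspan : ∀ s : Finset ℕ, s.card ≤ m → finrank ℝ ↥(span ℝ (w '' ↑s)) = s.card := by
    intro s hs
    have h := finrank_span_eq_card (li_moment m s hs)
    rw [Set.image_eq_range, show (fun x : ↥(↑s : Set ℕ) => w ↑x) = (fun j : ↥(↑s : Set ℕ) => fun i : Fin m => ((j : ℕ) : ℝ) ^ (i : ℕ)) from rfl, h]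
    simp
  set F : ℕ → Projectivization ℝ (Fin m → ℝ) := fun t => Projectivization.mk ℝ (w t) (hw0 t)
    with hF
  have hFinj : Function.Injective F := by
    intro a b h
    obtain ⟨c, hc⟩ := (Projectivization.mk_eq_mk_iff' ℝ _ _ (hw0 a) (hw0 b)).mp h
    have h0 := congrFun hc ⟨0, by omega⟩
    have h1 := congrFun hc ⟨1, by omega⟩
    simp [hw] at h0 h1
    rw [h0] at h1
    simpa using h1.symm
  have hsup : ∀ s : Finset ℕ,
      (⨆ p ∈ s.image F, Projectivization.submodule p) = span ℝ (w '' ↑s) := by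
    intro s
    rw [Finset.iSup_finset_image, ← biSup_span]
    exact biSup_congr fun t _ => Projectivization.submodule_mk _ _
  refine ⟨(Finset.range n).image F, by rw [Finset.card_image_of_injective _ hFinj,
    Finset.card_range], ?_, ?_⟩
  · intro T hT hTc
    obtain ⟨s, hs, rfl⟩ := Finset.subset_image_iff.mp hT
    have hscard : s.card = (s.image F).card := (Finset.card_image_of_injective _ hFinj).symm
    rw [hsup, hspan s (by omega), hscard]
  · have h1 : (⨆ p ∈ (Finset.range m).image F, Projectivization.submodule p) = ⊤ := by
      apply Submodule.eq_top_of_finrank_eq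
      rw [hsup, hspan (Finset.range m) (by simp), Finset.card_range, Module.finrank_fin_fun]
    have h2 : (Finset.range m).image F ⊆ (Finset.range n).image F :=
      Finset.image_subset_image (by simpa using hn)
    apply le_antisymm le_top
    rw [← h1]
    exact biSup_mono fun p hp => h2 hp

set_option maxHeartbeats 1000000 in
lemma gp_le (S : Finset (Projectivization ℝ V)) (m : ℕ)
    (hGP : ∀ T ⊆ S, T.card = m → finrank ℝ ↥(⨆ p ∈ T, Projectivization.submodule p) = m)
    (hcard : m ≤ S.card) :
    ∀ T ⊆ S, T.card ≤ m → finrank ℝ ↥(⨆ p ∈ T, Projectivization.submodule p) = T.card := by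
  intro T hT hTc
  obtain ⟨T', hTT', hT'S, hT'c⟩ := Finset.exists_subsuperset_card_eq hT hTc hcard
  have h1 := (b1 T').mp (by rw [hGP T' hT'S hT'c, hT'c])
  refine (b1 T).mpr ?_
  have h2 := h1.comp (fun p : (T : Set (Projectivization ℝ V)) =>
      (⟨p.1, hTT' p.2⟩ : (T' : Set (Projectivization ℝ V))))
    (fun a b h => Subtype.ext (by simpa using h))
  exact h2

lemma main (k n : ℕ) (hk : 2 ≤ k) (hn : k + 2 ≤ n) :
    n * e k (n - 1) ≤ (k + 1) * e (k + 1) n := by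
  classical
  -- the admissible set for (k+1, n) is nonempty
  have hne : { N | ∃ S : Finset (Projectivization ℝ (Fin (k+1+1) → ℝ)), S.card = n ∧
      (∀ T ⊆ S, T.card = k+1 →
        finrank ℝ ↥(⨆ p ∈ T, Projectivization.submodule p) = k+1) ∧
      (⨆ p ∈ S, Projectivization.submodule p) = ⊤ ∧
      N = ordinaryCount (k+1) S }.Nonempty := by
    obtain ⟨S, h1, h2, h3⟩ := exists_config (k+2) n (by omega) (by omega)
    exact ⟨ordinaryCount (k+1) S, S, h1,
      fun T hT hTc => by rw [h2 T hT (by omega), hTc], h3, rfl⟩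
  obtain ⟨S, hScard, hGP, hTop, hOC⟩ := Nat.sInf_mem hne
  have heq : e (k+1) n = ordinaryCount (k+1) S := hOC
  have hGPle := gp_le S (k+1) hGP (by omega)
  set Ord : Set (Submodule ℝ (Fin (k+1+1) → ℝ)) :=
    {H | finrank ℝ ↥H = k+1 ∧
      {p ∈ (S : Set (Projectivization ℝ (Fin (k+1+1) → ℝ))) | p.submodule ≤ H}.ncard = k+1}
    with hOrd
  have hOCOrd : ordinaryCount (k+1) S = Ord.ncard := rfl
  have hfiltercard : ∀ H, {p ∈ (S : Set (Projectivization ℝ (Fin (k+1+1) → ℝ))) |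
      p.submodule ≤ H}.ncard = (S.filter (fun p => p.submodule ≤ H)).card := by
    intro H
    rw [show {p ∈ (S : Set (Projectivization ℝ (Fin (k+1+1) → ℝ))) | p.submodule ≤ H}
        = ↑(S.filter (fun p => p.submodule ≤ H)) from by ext p; simp,
      Set.ncard_coe_finset]
  have hrecover : ∀ H ∈ Ord,
      (⨆ p ∈ S.filter (fun p => p.submodule ≤ H), Projectivization.submodule p) = H := by
    intro H hH
    have hfc : (S.filter (fun p => p.submodule ≤ H)).card = k+1 := by
      rw [← hfiltercard H]; exact hH.2
    apply Submodule.eq_of_le_of_finrank_eq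
    · exact iSup₂_le fun p hp => (Finset.mem_filter.mp hp).2
    · rw [hGPle _ (Finset.filter_subset _ _) (le_of_eq hfc), hfc, hH.1]
  have hOrdFin : Ord.Finite := by
    apply Set.Finite.subset (Set.Finite.image
      (fun F : Finset (Projectivization ℝ (Fin (k+1+1) → ℝ)) =>
        ⨆ p ∈ F, Projectivization.submodule p) S.powerset.finite_toSet)
    intro H hH
    exact ⟨S.filter (fun p => p.submodule ≤ H),
      Finset.mem_coe.mpr (Finset.mem_powerset.mpr (Finset.filter_subset _ _)), hrecover H hH⟩
  set OrdF := hOrdFin.toFinset with hOrdF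
  have hOrdFcard : OrdF.card = ordinaryCount (k+1) S := by
    rw [hOCOrd, ← Set.ncard_coe_finset, Set.Finite.coe_toFinset]
  have hptcount : ∀ H ∈ OrdF, (S.filter (fun p => p.submodule ≤ H)).card = k+1 := by
    intro H hH
    rw [← hfiltercard H]
    exact ((hOrdFin.mem_toFinset).mp hH).2
  have hx : ∀ x ∈ S, e k (n-1) ≤ (OrdF.filter (fun H => x.submodule ≤ H)).card := by
    intro x hxS
    have hV : finrank ℝ (Fin (k+1+1) → ℝ) = k+2 := by
      rw [Module.finrank_fin_fun]
    have hU0 : finrank ℝ ↥(x.submodule) = 1 := x.finrank_submodule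
    have hQ : finrank ℝ ((Fin (k+1+1) → ℝ) ⧸ x.submodule) = k+1 := by
      have h := Submodule.finrank_quotient_add_finrank x.submodule
      omega
    let eqv : ((Fin (k+1+1) → ℝ) ⧸ x.submodule) ≃ₗ[ℝ] (Fin (k+1) → ℝ) :=
      LinearEquiv.ofFinrankEq _ _ (by rw [hQ, Module.finrank_fin_fun])
    set π : (Fin (k+1+1) → ℝ) →ₗ[ℝ] (Fin (k+1) → ℝ) :=
      eqv.toLinearMap ∘ₗ x.submodule.mkQ with hπ
    have hker : LinearMap.ker π = x.submodule := by
      rw [hπ, LinearMap.ker_comp, LinearEquiv.ker, Submodule.comap_bot, Submodule.ker_mkQ]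
    have hsurj : Function.Surjective π := by
      rw [hπ, LinearMap.coe_comp]
      exact eqv.surjective.comp (Submodule.mkQ_surjective _)
    have hmapbot : Submodule.map π x.submodule = ⊥ := by
      rw [← hker]
      exact le_bot_iff.mp (Submodule.map_le_iff_le_comap.mpr (by simp [Submodule.comap_bot]))
    have hP1 : ∀ T : Finset (Projectivization ℝ (Fin (k+1+1) → ℝ)), T ⊆ S → x ∉ T → T.card ≤ k →
        finrank ℝ ↥(Submodule.map π (⨆ p ∈ T, Projectivization.submodule p)) = T.card := by
      intro T hTS hxT hTc
      set U := ⨆ p ∈ T, Projectivization.submodule p with hU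
      have hUr : finrank ℝ ↥U = T.card := hGPle T hTS (by omega)
      have hins : finrank ℝ ↥(x.submodule ⊔ U) = T.card + 1 := by
        have h := hGPle (insert x T) (Finset.insert_subset hxS hTS)
          (by rw [Finset.card_insert_of_notMem hxT]; omega)
        rwa [Finset.iSup_insert, Finset.card_insert_of_notMem hxT] at h
      have hinf : U ⊓ x.submodule = ⊥ := by
        have h2 := Submodule.finrank_sup_add_finrank_inf_eq U x.submodule
        rw [hUr, hU0, sup_comm, hins] at h2
        exact Submodule.finrank_eq_zero.mp (by omega)
      have h3 := finrank_map_add π U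
      rw [hker, hinf] at h3
      simpa [hUr] using h3
    have hP2 : ∀ T : Finset (Projectivization ℝ (Fin (k+1+1) → ℝ)), T ⊆ S → x ∉ T → T.card ≤ k →
        (⨆ p ∈ T, Projectivization.submodule p) ⊓ x.submodule = ⊥ := by
      intro T hTS hxT hTc
      set U := ⨆ p ∈ T, Projectivization.submodule p with hU
      have hUr : finrank ℝ ↥U = T.card := hGPle T hTS (by omega)
      have hins : finrank ℝ ↥(x.submodule ⊔ U) = T.card + 1 := by
        have h := hGPle (insert x T) (Finset.insert_subset hxS hTS)
          (by rw [Finset.card_insert_of_notMem hxT]; omega)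
        rwa [Finset.iSup_insert, Finset.card_insert_of_notMem hxT] at h
      have h2 := Submodule.finrank_sup_add_finrank_inf_eq U x.submodule
      rw [hUr, hU0, sup_comm, hins] at h2
      exact Submodule.finrank_eq_zero.mp (by omega)
    have hnz : ∀ p ∈ S, p ≠ x → π p.rep ≠ 0 := by
      intro p hpS hpx h0
      have hle : p.submodule ≤ x.submodule := by
        rw [Projectivization.submodule_eq, Submodule.span_singleton_le_iff_mem, ← hker]
        exact LinearMap.mem_ker.mpr h0
      have hbot := hP2 {p} (by simpa using hpS)
        (by simp only [Finset.mem_singleton]; exact fun h => hpx h.symm)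
        (by rw [Finset.card_singleton]; omega)
      rw [Finset.iSup_singleton, inf_eq_left.mpr hle] at hbot
      have : finrank ℝ ↥(p.submodule) = 1 := p.finrank_submodule
      rw [hbot] at this
      simp at this
    set f : Projectivization ℝ (Fin (k+1+1) → ℝ) → Projectivization ℝ (Fin (k+1) → ℝ) :=
      fun p => if h : π p.rep = 0 then Classical.arbitrary _
        else Projectivization.mk ℝ (π p.rep) h with hf
    have hfsub : ∀ p, π p.rep ≠ 0 → (f p).submodule = Submodule.map π p.submodule := by
      intro p h
      rw [hf]
      simp only [dif_neg h]
      rw [Projectivization.submodule_mk, Projectivization.submodule_eq, Submodule.map_span,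
        Set.image_singleton]
    have hinj : Set.InjOn f ↑(S.erase x) := by
      intro p hp q hq hpq
      by_contra hne'
      have hpS := Finset.mem_of_mem_erase (Finset.mem_coe.mp hp)
      have hqS := Finset.mem_of_mem_erase (Finset.mem_coe.mp hq)
      have hpx := Finset.ne_of_mem_erase (Finset.mem_coe.mp hp)
      have hqx := Finset.ne_of_mem_erase (Finset.mem_coe.mp hq)
      have hnzp := hnz p hpS hpx
      have hnzq := hnz q hqS hqx
      have h2 := hP1 {p, q}
        (Finset.insert_subset hpS (Finset.singleton_subset_iff.mpr hqS))
        (by simp [Finset.mem_insert, Finset.mem_singleton]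
            exact ⟨fun h => hpx h.symm, fun h => hqx h.symm⟩)
        (by rw [Finset.card_insert_of_notMem (by simp [hne']), Finset.card_singleton]; omega)
      rw [show (⨆ r ∈ ({p, q} : Finset (Projectivization ℝ (Fin (k+1+1) → ℝ))),
            Projectivization.submodule r) = p.submodule ⊔ q.submodule
          from by rw [Finset.iSup_insert, Finset.iSup_singleton],
        Submodule.map_sup, ← hfsub p hnzp, ← hfsub q hnzq, hpq, sup_idem,
        Finset.card_insert_of_notMem (by simp [hne']), Finset.card_singleton] at h2
      have h1 : finrank ℝ ↥((f q).submodule) = 1 := (f q).finrank_submodule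
      omega
    set Sx := (S.erase x).image f with hSx
    have hSxcard : Sx.card = n - 1 := by
      rw [hSx, Finset.card_image_of_injOn hinj, Finset.card_erase_of_mem hxS, hScard]
    have hmapsup : ∀ T : Finset (Projectivization ℝ (Fin (k+1+1) → ℝ)), T ⊆ S.erase x →
        (⨆ q ∈ T.image f, Projectivization.submodule q)
          = Submodule.map π (⨆ p ∈ T, Projectivization.submodule p) := by
      intro T hT
      rw [Finset.iSup_finset_image]
      simp only [Submodule.map_iSup]
      exact biSup_congr fun p hp => hfsub p
        (hnz p (Finset.mem_of_mem_erase (hT hp)) (Finset.ne_of_mem_erase (hT hp)))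
    have hGPx : ∀ T' ⊆ Sx, T'.card = k →
        finrank ℝ ↥(⨆ q ∈ T', Projectivization.submodule q) = k := by
      intro T' hT' hT'c
      obtain ⟨T, hTsub, rfl⟩ := Finset.subset_image_iff.mp hT'
      have hTcard : T.card = k := by
        have hci : (T.image f).card = T.card :=
          Finset.card_image_of_injOn (hinj.mono (by exact_mod_cast hTsub))
        omega
      rw [hmapsup T hTsub, hP1 T (fun a ha => Finset.mem_of_mem_erase (hTsub ha))
        (fun hxT => Finset.notMem_erase x S (hTsub hxT)) (by omega), hTcard]
    have hTopx : (⨆ q ∈ Sx, Projectivization.submodule q) = ⊤ := by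
      have hsup : x.submodule ⊔ (⨆ p ∈ S.erase x, Projectivization.submodule p) = ⊤ := by
        rw [← Finset.iSup_insert, Finset.insert_erase hxS]
        exact hTop
      rw [hSx, hmapsup (S.erase x) Finset.Subset.rfl]
      calc Submodule.map π (⨆ p ∈ S.erase x, Projectivization.submodule p)
          = Submodule.map π ((⨆ p ∈ S.erase x, Projectivization.submodule p) ⊔ x.submodule) := by
            rw [Submodule.map_sup, hmapbot, sup_bot_eq]
        _ = Submodule.map π ⊤ := by rw [sup_comm, hsup]
        _ = ⊤ := by rw [Submodule.map_top, LinearMap.range_eq_top.mpr hsurj]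
    have hmemx : e k (n-1) ≤ ordinaryCount k Sx :=
      Nat.sInf_le ⟨Sx, hSxcard, hGPx, hTopx, rfl⟩
    refine le_trans hmemx ?_
    rw [show ordinaryCount k Sx = ({H' : Submodule ℝ (Fin (k+1) → ℝ) | finrank ℝ ↥H' = k ∧
        {q ∈ (Sx : Set (Projectivization ℝ (Fin (k+1) → ℝ))) | q.submodule ≤ H'}.ncard = k}).ncard
      from rfl,
      show (OrdF.filter (fun H => x.submodule ≤ H)).card
        = (↑(OrdF.filter (fun H => x.submodule ≤ H)) : Set (Submodule ℝ (Fin (k+1+1) → ℝ))).ncard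
      from (Set.ncard_coe_finset _).symm]
    apply Set.ncard_le_ncard_of_injOn (fun H' => Submodule.comap π H')
    · rintro H' ⟨hr, hc⟩
      have hkle : LinearMap.ker π ≤ Submodule.comap π H' := by
        intro y hy
        rw [Submodule.mem_comap, LinearMap.mem_ker.mp hy]
        exact H'.zero_mem
      have hcomapr : finrank ℝ ↥(Submodule.comap π H') = k+1 := by
        have h3 := finrank_map_add π (Submodule.comap π H')
        rw [Submodule.map_comap_eq_of_surjective hsurj, inf_eq_right.mpr hkle, hker, hU0, hr]
          at h3
        omega
      have himg : f '' {p ∈ (↑(S.erase x) : Set (Projectivization ℝ (Fin (k+1+1) → ℝ))) |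
            p.submodule ≤ Submodule.comap π H'}
          = {q ∈ (Sx : Set (Projectivization ℝ (Fin (k+1) → ℝ))) | q.submodule ≤ H'} := by
        ext q
        constructor
        · rintro ⟨p, ⟨hp, hple⟩, rfl⟩
          have hpe := Finset.mem_coe.mp hp
          refine ⟨Finset.mem_coe.mpr (Finset.mem_image_of_mem f hpe), ?_⟩
          rw [hfsub p (hnz p (Finset.mem_of_mem_erase hpe) (Finset.ne_of_mem_erase hpe))]
          exact Submodule.map_le_iff_le_comap.mpr hple
        · rintro ⟨hq, hqle⟩
          obtain ⟨p, hp, rfl⟩ := Finset.mem_image.mp (Finset.mem_coe.mp hq)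
          refine ⟨p, ⟨Finset.mem_coe.mpr hp, ?_⟩, rfl⟩
          apply Submodule.map_le_iff_le_comap.mp
          rwa [← hfsub p (hnz p (Finset.mem_of_mem_erase hp) (Finset.ne_of_mem_erase hp))]
      have hpts : {p ∈ (S : Set (Projectivization ℝ (Fin (k+1+1) → ℝ))) |
            p.submodule ≤ Submodule.comap π H'}
          = insert x {p ∈ (↑(S.erase x) : Set (Projectivization ℝ (Fin (k+1+1) → ℝ))) |
            p.submodule ≤ Submodule.comap π H'} := by
        ext p
        simp only [Set.mem_setOf_eq, Set.mem_insert_iff, Finset.mem_coe, Finset.mem_erase]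
        constructor
        · rintro ⟨hpS, hple⟩
          by_cases hpx : p = x
          · exact Or.inl hpx
          · exact Or.inr ⟨⟨hpx, hpS⟩, hple⟩
        · rintro (rfl | ⟨⟨hpx, hpS⟩, hple⟩)
          · exact ⟨hxS, by rw [← hker]; exact hkle⟩
          · exact ⟨hpS, hple⟩
      have hcnt : {p ∈ (S : Set (Projectivization ℝ (Fin (k+1+1) → ℝ))) |
          p.submodule ≤ Submodule.comap π H'}.ncard = k+1 := by
        rw [hpts, Set.ncard_insert_of_notMem
          (fun hmem => Finset.notMem_erase x S (Finset.mem_coe.mp hmem.1))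
          (Set.Finite.subset (S.erase x).finite_toSet (Set.sep_subset _ _))]
        rw [← himg, Set.ncard_image_of_injOn (hinj.mono (Set.sep_subset _ _))] at hc
        omega
      exact Finset.mem_coe.mpr (Finset.mem_filter.mpr
        ⟨hOrdFin.mem_toFinset.mpr ⟨hcomapr, hcnt⟩, hker ▸ hkle⟩)
    · intro H1 _ H2 _ hcc
      have h := congrArg (Submodule.map π) hcc
      rwa [Submodule.map_comap_eq_of_surjective hsurj,
        Submodule.map_comap_eq_of_surjective hsurj] at h
  calc n * e k (n-1) = ∑ _x ∈ S, e k (n-1) := by rw [Finset.sum_const, hScard, smul_eq_mul]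
    _ ≤ ∑ x ∈ S, (OrdF.filter (fun H => x.submodule ≤ H)).card := Finset.sum_le_sum hx
    _ = ∑ H ∈ OrdF, (S.filter (fun p => p.submodule ≤ H)).card := by
        simp_rw [Finset.card_filter]
        exact Finset.sum_comm
    _ = ∑ _H ∈ OrdF, (k+1) := Finset.sum_congr rfl hptcount
    _ = (k+1) * e (k+1) n := by
        rw [Finset.sum_const, smul_eq_mul, hOrdFcard, ← heq, Nat.mul_comm]

end Stmt14Aux

theorem stmt14 (d n : ℕ) (hd : 3 ≤ d) (hn : d + 1 ≤ n) :
    ((n : ℚ) / (d : ℚ)) * (e (d - 1) (n - 1) : ℚ) ≤ (e d n : ℚ) := by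
  obtain ⟨k, hk, rfl⟩ : ∃ k, 2 ≤ k ∧ d = k + 1 := ⟨d - 1, by omega, by omega⟩
  have h := Stmt14Aux.main k n hk (by omega)
  have hq : (n : ℚ) * (e k (n - 1) : ℚ) ≤ (((k : ℚ) + 1)) * (e (k + 1) n : ℚ) := by
    exact_mod_cast h
  have hd1 : k + 1 - 1 = k := by omega
  rw [hd1, div_mul_eq_mul_div, div_le_iff₀ (by positivity : (0:ℚ) < ((k+1 : ℕ) : ℚ))]
  push_cast
  linarith
end

section
/- Let S be a set of 8 points in PG(4,ℝ) such that every 4 points of S span a hyperplane and S spans the whole space. Then S spans at least 25 ordinary hyperplanes, i.e., e_4(8) ≥ 25. -/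
/-!
Every 4 points of `S` lie in exactly one hyperplane spanned by points of `S`, and two such
hyperplanes share at most 3 points of `S`. Counting 4-subsets of `S` gives
`τ₄ + 5τ₅ + 15τ₆ + 35τ₇ = 70`, where `τᵢ` counts the spanned hyperplanes with exactly `i` points
(no hyperplane contains all 8, as `S` spans the space). A 5-subset of a hyperplane together with a
point off it is a 6-subset of `S` from which the hyperplane is recovered, so
`3τ₅ + 12τ₆ + 21τ₇ ≤ 28`. Eliminating gives `3τ₄ ≥ 70 + 15τ₆`, hence `τ₄ ≥ 24`, and
`τ₄ ≡ 70 ≡ 0 (mod 5)` improves this to `τ₄ ≥ 25`.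
-/

open Finset Module

section Packing

variable {α ι : Type*} [DecidableEq α] {S : Finset α} {s : Finset ι} {B : ι → Finset α} {t : ℕ}

theorem sum_choose_card_eq_choose (hB : ∀ i ∈ s, B i ⊆ S)
    (hcover : ∀ T ⊆ S, #T = t → ∃ i ∈ s, T ⊆ B i)
    (hsep : ∀ i ∈ s, ∀ j ∈ s, t ≤ #(B i ∩ B j) → i = j) :
    ∑ i ∈ s, (#(B i)).choose t = (#S).choose t := by
  have hunion : s.biUnion (fun i => (B i).powersetCard t) = S.powersetCard t := by
    ext T
    simp only [mem_biUnion, mem_powersetCard]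
    constructor
    · rintro ⟨i, hi, hTB, hT⟩
      exact ⟨hTB.trans (hB i hi), hT⟩
    · rintro ⟨hTS, hT⟩
      obtain ⟨i, hi, hTB⟩ := hcover T hTS hT
      exact ⟨i, hi, hTB, hT⟩
  have hdisj : (s : Set ι).PairwiseDisjoint (fun i => (B i).powersetCard t) := by
    intro i hi j hj hij
    refine disjoint_left.mpr fun T hTi hTj => hij (hsep i hi j hj ?_)
    rw [mem_powersetCard] at hTi hTj
    exact hTi.2 ▸ card_le_card (subset_inter hTi.1 hTj.1)
  rw [← card_powersetCard, ← hunion, card_biUnion hdisj]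
  simp only [card_powersetCard]

/-- Sending a `(t+1)`-subset `A` of a block and a point `x` of `S` off that block to
`insert x A` is injective, because `A` meets any other such `A'` in at least `t` points. -/
theorem sum_choose_succ_mul_card_sdiff_le (hB : ∀ i ∈ s, B i ⊆ S)
    (hsep : ∀ i ∈ s, ∀ j ∈ s, t ≤ #(B i ∩ B j) → i = j) :
    ∑ i ∈ s, (#(B i)).choose (t + 1) * (#S - #(B i)) ≤ (#S).choose (t + 2) := by
  set P := s.sigma fun i => (B i).powersetCard (t + 1) ×ˢ (S \ B i)
  have hP : ∀ {i A x}, (⟨i, A, x⟩ : Σ _ : ι, Finset α × α) ∈ P ↔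
      i ∈ s ∧ (A ⊆ B i ∧ #A = t + 1) ∧ x ∈ S ∧ x ∉ B i := by
    simp only [P, mem_sigma, mem_product, mem_powersetCard, mem_sdiff, implies_true]
  have hcardP : #P = ∑ i ∈ s, (#(B i)).choose (t + 1) * (#S - #(B i)) := by
    refine (card_sigma _ _).trans (sum_congr rfl fun i hi => ?_)
    rw [card_product, card_powersetCard, card_sdiff_of_subset (hB i hi)]
  rw [← hcardP, ← card_powersetCard]
  refine card_le_card_of_injOn (fun x => insert x.2.2 x.2.1) (fun ⟨i, A, x⟩ hx => ?_) ?_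
  · obtain ⟨hi, ⟨hA, hAcard⟩, hxS, hxB⟩ := hP.mp hx
    rw [mem_coe, mem_powersetCard, card_insert_of_notMem fun h => hxB (hA h), hAcard]
    exact ⟨insert_subset hxS (hA.trans (hB i hi)), rfl⟩
  · rintro ⟨i, A, x⟩ hx ⟨j, A', x'⟩ hx' (heq : insert x A = insert x' A')
    obtain ⟨hi, ⟨hA, hAcard⟩, -, hxB⟩ := hP.mp hx
    obtain ⟨hj, ⟨hA', hA'card⟩, -, hx'B⟩ := hP.mp hx'
    have hunion : #(A ∪ A') ≤ t + 2 := by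
      calc #(A ∪ A') ≤ #(insert x A) :=
            card_le_card (union_subset (subset_insert x A) (heq ▸ subset_insert x' A'))
        _ = t + 2 := by rw [card_insert_of_notMem fun h => hxB (hA h), hAcard]
    have hinter : t ≤ #(A ∩ A') := by
      have := card_union_add_card_inter A A'
      omega
    obtain rfl : i = j := hsep i hi j hj (hinter.trans (card_le_card (inter_subset_inter hA hA')))
    have hxA : A = insert x A ∩ B i := by
      rw [insert_inter_of_notMem hxB, inter_eq_left.mpr hA]
    have hx'A' : A' = insert x' A' ∩ B i := by
      rw [insert_inter_of_notMem hx'B, inter_eq_left.mpr hA']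
    obtain rfl : x = x' := by
      rcases mem_insert.mp (heq ▸ mem_insert_self x A) with h | h
      · exact h
      · exact absurd (hA' h) hxB
    rw [hxA, hx'A', heq]

end Packing

theorem twentyFive_le_card_filter_eq_four {ι : Type*} {s : Finset ι} {f : ι → ℕ}
    (hf : ∀ i ∈ s, f i ∈ Icc 4 7) (h₄ : ∑ i ∈ s, (f i).choose 4 = 70)
    (h₅ : ∑ i ∈ s, (f i).choose 5 * (8 - f i) ≤ 28) :
    25 ≤ #{i ∈ s | f i = 4} := by
  rw [← sum_fiberwise_of_maps_to' hf fun k => k.choose 4] at h₄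
  rw [← sum_fiberwise_of_maps_to' hf fun k => k.choose 5 * (8 - k)] at h₅
  simp only [sum_const, smul_eq_mul] at h₄ h₅
  rw [show Icc 4 7 = {4, 5, 6, 7} by rfl] at h₄ h₅
  simp only [sum_insert, mem_insert, mem_singleton, Nat.reduceEqDiff, or_self, not_false_eq_true,
    sum_singleton, Nat.choose] at h₄ h₅
  omega

section Projective

open scoped Classical LinearAlgebra.Projectivization

variable {K V : Type*} [Field K] [AddCommGroup V] [Module K V]

noncomputable def pointSpan (T : Finset (ℙ K V)) : Submodule K V :=
  ⨆ p ∈ T, p.submodule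

noncomputable def pointsIn (S : Finset (ℙ K V)) (H : Submodule K V) : Finset (ℙ K V) :=
  {p ∈ S | p.submodule ≤ H}

noncomputable def spannedSubspaces (S : Finset (ℙ K V)) (t : ℕ) : Finset (Submodule K V) :=
  (S.powersetCard t).image pointSpan

variable {S T : Finset (ℙ K V)} {H H' : Submodule K V} {t : ℕ}

theorem pointSpan_le_iff : pointSpan T ≤ H ↔ ∀ p ∈ T, p.submodule ≤ H :=
  iSup₂_le_iff

theorem mem_pointsIn {p : ℙ K V} : p ∈ pointsIn S H ↔ p ∈ S ∧ p.submodule ≤ H :=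
  mem_filter

theorem pointsIn_subset : pointsIn S H ⊆ S :=
  filter_subset _ _

theorem subset_pointsIn_pointSpan (hT : T ⊆ S) : T ⊆ pointsIn S (pointSpan T) :=
  fun p hp => mem_pointsIn.mpr ⟨hT hp, le_iSup₂_of_le p hp le_rfl⟩

theorem pointSpan_eq_of_subset_pointsIn [FiniteDimensional K V]
    (hspan : ∀ T ⊆ S, #T = t → finrank K (pointSpan T) = t) (hH : finrank K H = t)
    (hT : T ⊆ pointsIn S H) (hTcard : #T = t) : pointSpan T = H :=
  Submodule.eq_of_le_of_finrank_eq
    (pointSpan_le_iff.mpr fun p hp => (mem_pointsIn.mp (hT hp)).2)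
    (by rw [hspan T (hT.trans pointsIn_subset) hTcard, hH])

theorem finrank_of_mem_spannedSubspaces
    (hspan : ∀ T ⊆ S, #T = t → finrank K (pointSpan T) = t) (hH : H ∈ spannedSubspaces S t) :
    finrank K H = t := by
  obtain ⟨T, hT, rfl⟩ := mem_image.mp hH
  rw [mem_powersetCard] at hT
  exact hspan T hT.1 hT.2

theorem le_card_pointsIn (hH : H ∈ spannedSubspaces S t) : t ≤ #(pointsIn S H) := by
  obtain ⟨T, hT, rfl⟩ := mem_image.mp hH
  rw [mem_powersetCard] at hT
  exact hT.2 ▸ card_le_card (subset_pointsIn_pointSpan hT.1)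

theorem card_pointsIn_lt (htop : pointSpan S = ⊤) (hH : H ≠ ⊤) : #(pointsIn S H) < #S := by
  refine card_lt_card (ssubset_of_subset_of_ne pointsIn_subset fun heq => hH ?_)
  rw [eq_top_iff, ← htop, pointSpan_le_iff]
  exact fun p hp => (mem_pointsIn.mp (heq ▸ hp)).2

theorem exists_mem_spannedSubspaces_subset_pointsIn (hT : T ⊆ S) (hTcard : #T = t) :
    ∃ H ∈ spannedSubspaces S t, T ⊆ pointsIn S H :=
  ⟨pointSpan T, mem_image_of_mem _ (mem_powersetCard.mpr ⟨hT, hTcard⟩),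
    subset_pointsIn_pointSpan hT⟩

theorem eq_of_le_card_pointsIn_inter [FiniteDimensional K V]
    (hspan : ∀ T ⊆ S, #T = t → finrank K (pointSpan T) = t)
    (hH : H ∈ spannedSubspaces S t) (hH' : H' ∈ spannedSubspaces S t)
    (hinter : t ≤ #(pointsIn S H ∩ pointsIn S H')) : H = H' := by
  obtain ⟨T, hT, hTcard⟩ := exists_subset_card_eq hinter
  rw [← pointSpan_eq_of_subset_pointsIn hspan (finrank_of_mem_spannedSubspaces hspan hH)
      (hT.trans inter_subset_left) hTcard,
    pointSpan_eq_of_subset_pointsIn hspan (finrank_of_mem_spannedSubspaces hspan hH')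
      (hT.trans inter_subset_right) hTcard]

theorem ncard_setOf_finrank_eq_eq_card_filter [FiniteDimensional K V]
    (hspan : ∀ T ⊆ S, #T = t → finrank K (pointSpan T) = t) :
    {H : Submodule K V | finrank K H = t ∧
      {p ∈ (S : Set (ℙ K V)) | p.submodule ≤ H}.ncard = t}.ncard =
      #{H ∈ spannedSubspaces S t | #(pointsIn S H) = t} := by
  have hpts : ∀ H : Submodule K V,
      {p ∈ (S : Set (ℙ K V)) | p.submodule ≤ H} = (pointsIn S H : Set (ℙ K V)) := by
    intro H
    ext p
    simp [mem_pointsIn]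
  rw [← Set.ncard_coe_finset]
  congr 1
  ext H
  simp only [Set.mem_ofPred_eq, coe_filter, hpts, Set.ncard_coe_finset]
  constructor
  · rintro ⟨hH, hcard⟩
    refine ⟨?_, hcard⟩
    rw [← pointSpan_eq_of_subset_pointsIn hspan hH subset_rfl hcard]
    exact mem_image_of_mem _ (mem_powersetCard.mpr ⟨pointsIn_subset, hcard⟩)
  · rintro ⟨hH, hcard⟩
    exact ⟨finrank_of_mem_spannedSubspaces hspan hH, hcard⟩

end Projective

/-- Any set of 8 points of `PG(4,ℝ)`, every 4 of which span a hyperplane and spanning the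
whole space, spans at least 25 ordinary hyperplanes: `e₄(8) ≥ 25`. -/
theorem stmt15
    (S : Finset (Projectivization ℝ (Fin 5 → ℝ))) (hcard : S.card = 8)
    (hspan : ∀ T ⊆ S, T.card = 4 →
      finrank ℝ ↥(⨆ p ∈ T, Projectivization.submodule p) = 4)
    (htop : (⨆ p ∈ S, Projectivization.submodule p) = ⊤) :
    25 ≤ {H : Submodule ℝ (Fin 5 → ℝ) | finrank ℝ ↥H = 4 ∧
      {p ∈ (S : Set (Projectivization ℝ (Fin 5 → ℝ))) | p.submodule ≤ H}.ncard = 4}.ncard := by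
  classical
  change ∀ T ⊆ S, #T = 4 → finrank ℝ (pointSpan T) = 4 at hspan
  change pointSpan S = ⊤ at htop
  rw [ncard_setOf_finrank_eq_eq_card_filter hspan]
  have hblocks : ∀ H ∈ spannedSubspaces S 4, pointsIn S H ⊆ S := fun _ _ => pointsIn_subset
  have hsep : ∀ H ∈ spannedSubspaces S 4, ∀ H' ∈ spannedSubspaces S 4,
      4 ≤ #(pointsIn S H ∩ pointsIn S H') → H = H' :=
    fun _ hH _ hH' => eq_of_le_card_pointsIn_inter hspan hH hH'
  refine twentyFive_le_card_filter_eq_four (fun H hH => mem_Icc.mpr ⟨le_card_pointsIn hH, ?_⟩)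
    ?_ ?_
  · have hne : H ≠ ⊤ := by
      rintro rfl
      simpa using finrank_of_mem_spannedSubspaces hspan hH
    have := card_pointsIn_lt htop hne
    omega
  · rw [sum_choose_card_eq_choose hblocks
      (fun _ => exists_mem_spannedSubspaces_subset_pointsIn) hsep, hcard]
    rfl
  · have h := sum_choose_succ_mul_card_sdiff_le hblocks hsep
    rw [hcard] at h
    exact h
end
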